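/- arXiv:2003.13258 — 12 statements merged into one kernel-verified Lean document; each statement's English description precedes it below -/
import Mathlib

section
/- Let P ∈ ℝ^{n×n} be symmetric positive semidefinite, R ∈ ℝ^{m×m} symmetric positive definite, B ∈ ℝ^{n×m}, Ξ ∈ ℝ^{n×k}, and λ > λmax(ΞᵀPΞ). Then the matrix I + P B R⁻¹ Bᵀ − (1/λ) P Ξ Ξᵀ is invertible. -/
open Matrix

/-- Conjugation by a unitary (or any invertible) matrix preserves positive definiteness. -/
lemma aux_posDef_conj {p : ℕ} {U : Matrix (Fin p) (Fin p) ℝ} (hU : IsUnit U)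
    {D : Matrix (Fin p) (Fin p) ℝ} (hD : D.PosDef) : (U * D * Uᴴ).PosDef := by
  refine Matrix.PosDef.of_dotProduct_mulVec_pos (hD.posSemidef.mul_mul_conjTranspose_same U).1 fun x hx => ?_
  have hUc : IsUnit Uᴴ := by
    rw [Matrix.isUnit_iff_isUnit_det, Matrix.det_conjTranspose]
    exact ((Matrix.isUnit_iff_isUnit_det U).mp hU).star
  have hinj : Function.Injective (Uᴴ.mulVec) := Matrix.mulVec_injective_iff_isUnit.mpr hUc
  have hx' : Uᴴ *ᵥ x ≠ 0 := by
    intro h0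
    exact hx (hinj (by simpa using h0))
  have := hD.dotProduct_mulVec_pos hx'
  simpa only [star_mulVec, dotProduct_mulVec, vecMul_vecMul, conjTranspose_conjTranspose]
    using this

/-- If all eigenvalues of a PSD matrix `N` are `< l` then `1 - (1/l) • N` is positive definite. -/
lemma aux_one_sub_smul_posDef {p : ℕ} {N : Matrix (Fin p) (Fin p) ℝ} (hN : N.PosSemidef)
    {l : ℝ} (hl : 0 < l) (hev : ∀ i, hN.1.eigenvalues i < l) :
    ((1 : Matrix (Fin p) (Fin p) ℝ) - (1 / l) • N).PosDef := by
  have hH := hN.1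
  set U : Matrix (Fin p) (Fin p) ℝ := (hH.eigenvectorUnitary : Matrix (Fin p) (Fin p) ℝ) with hUdef
  have hUU : U * star U = 1 := (Matrix.mem_unitaryGroup_iff).mp hH.eigenvectorUnitary.2
  have hUunit : IsUnit U := by
    rw [Matrix.isUnit_iff_isUnit_det]
    exact IsUnit.of_mul_eq_one _ (by rw [← Matrix.det_mul, hUU, Matrix.det_one])
  have key : (1 : Matrix (Fin p) (Fin p) ℝ) - (1 / l) • N
      = U * (diagonal (fun i => 1 - hH.eigenvalues i / l)) * Uᴴ := by
    have hdg : (diagonal (fun i => 1 - hH.eigenvalues i / l) : Matrix (Fin p) (Fin p) ℝ)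
        = 1 - (1 / l) • diagonal (RCLike.ofReal ∘ hH.eigenvalues) := by
      ext i j
      rcases eq_or_ne i j with rfl | hij
      · simp [Matrix.diagonal_apply_eq, Matrix.one_apply_eq]
        ring
      · simp [Matrix.diagonal_apply_ne _ hij, Matrix.one_apply_ne hij]
    rw [hdg, Matrix.mul_sub, Matrix.sub_mul, Matrix.mul_one, ← Matrix.star_eq_conjTranspose, hUU]
    congr 1
    rw [Matrix.mul_smul, Matrix.smul_mul]
    congr 1
    rw [hUdef]
    exact hH.spectral_theorem
  rw [key]
  exact aux_posDef_conj hUunit (Matrix.PosDef.diagonal fun i => by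
    have := hev i
    have : hH.eigenvalues i / l < 1 := (div_lt_one hl).mpr this
    linarith)

/-- Each eigenvalue of `A * Aᵀ` is `< l` provided `spectrum ℝ (Aᵀ * A) < l` and `0 < l`. -/
lemma aux_eig_lt {n k : ℕ} (A : Matrix (Fin n) (Fin k) ℝ) {l : ℝ} (hl : 0 < l)
    (h : ∀ μ ∈ spectrum ℝ (Aᵀ * A), μ < l) (hN : (A * Aᵀ).PosSemidef) :
    ∀ i, hN.1.eigenvalues i < l := by
  intro i
  set μ := hN.1.eigenvalues i with hμdef
  by_cases hμ : μ = 0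
  · simpa [hμ] using hl
  set v : Fin n → ℝ := ⇑(hN.1.eigenvectorBasis i) with hvdef
  have hv : (A * Aᵀ) *ᵥ v = μ • v := hN.1.mulVec_eigenvectorBasis i
  have hv0 : v ≠ 0 := by
    have := hN.1.eigenvectorBasis.orthonormal.ne_zero i
    intro h0
    apply this
    ext j
    exact congrFun h0 j
  set w : Fin k → ℝ := Aᵀ *ᵥ v with hwdef
  have hw : (Aᵀ * A) *ᵥ w = μ • w := by
    simp only [hwdef, Matrix.mulVec_mulVec]
    rw [Matrix.mul_assoc, ← Matrix.mulVec_mulVec, hv, Matrix.mulVec_smul]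
  have hw0 : w ≠ 0 := by
    intro h0
    apply hμ
    have : (A * Aᵀ) *ᵥ v = 0 := by
      rw [← Matrix.mulVec_mulVec, ← hwdef, h0, Matrix.mulVec_zero]
    rw [hv] at this
    rcases smul_eq_zero.mp this with h | h
    · exact h
    · exact absurd h hv0
  have hmem : μ ∈ spectrum ℝ (Aᵀ * A) := by
    rw [spectrum.mem_iff]
    intro hunit
    have hinj := Matrix.mulVec_injective_iff_isUnit.mpr hunit
    apply hw0
    apply hinj
    rw [Matrix.mulVec_zero, Algebra.algebraMap_eq_smul_one, Matrix.sub_mulVec,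
      Matrix.smul_mulVec, Matrix.one_mulVec, hw, sub_self]
  exact h μ hmem

/-- `I + P B R⁻¹ Bᵀ − (1/λ) P Ξ Ξᵀ` is invertible. -/
theorem stmt_2 {n m k : ℕ} (hn : 0 < n) (hm : 0 < m) (hk : 0 < k)
    (P : Matrix (Fin n) (Fin n) ℝ) (hP : P.PosSemidef)
    (R : Matrix (Fin m) (Fin m) ℝ) (hR : R.PosDef)
    (B : Matrix (Fin n) (Fin m) ℝ) (Ξ : Matrix (Fin n) (Fin k) ℝ)
    (l : ℝ) (hlmax : ∀ μ ∈ spectrum ℝ (Ξᵀ * P * Ξ), μ < l) :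
    IsUnit ((1 : Matrix (Fin n) (Fin n) ℝ) + P * B * R⁻¹ * Bᵀ - (1 / l) • (P * Ξ * Ξᵀ)) := by
  classical
  have hQ : (Ξᵀ * P * Ξ).PosSemidef := by
    have := hP.conjTranspose_mul_mul_same Ξ
    rwa [Matrix.conjTranspose_eq_transpose_of_trivial] at this
  have hl : 0 < l := by
    have h1 := hQ.eigenvalues_nonneg ⟨0, hk⟩
    have h2 := hlmax _ (hQ.1.eigenvalues_mem_spectrum_real ⟨0, hk⟩)
    linarith
  open scoped MatrixOrder in
  set S := CFC.sqrt P with hSdef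
  have hSS : S * S = P := CFC.sqrt_mul_sqrt_self P hP.nonneg
  have hSsymm : Sᵀ = S := by
    have h := (CFC.sqrt_nonneg P).posSemidef.1.eq
    rw [Matrix.conjTranspose_eq_transpose_of_trivial] at h
    exact h
  set A : Matrix (Fin n) (Fin k) ℝ := S * Ξ with hAdef
  have hAA : Aᵀ * A = Ξᵀ * P * Ξ := by
    rw [hAdef, Matrix.transpose_mul, hSsymm, Matrix.mul_assoc, ← Matrix.mul_assoc S, hSS,
      ← Matrix.mul_assoc]
  have hNpsd : (A * Aᵀ).PosSemidef := by
    have := Matrix.posSemidef_self_mul_conjTranspose A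
    rwa [Matrix.conjTranspose_eq_transpose_of_trivial] at this
  have hev : ∀ i, hNpsd.1.eigenvalues i < l :=
    aux_eig_lt A hl (by rw [hAA]; exact hlmax) hNpsd
  have hD1 : ((1 : Matrix (Fin n) (Fin n) ℝ) - (1 / l) • (A * Aᵀ)).PosDef :=
    aux_one_sub_smul_posDef hNpsd hl hev
  have hD2 : ((S * B) * R⁻¹ * (S * B)ᵀ).PosSemidef := by
    have := hR.inv.posSemidef.mul_mul_conjTranspose_same (S * B)
    rwa [Matrix.conjTranspose_eq_transpose_of_trivial] at this
  have hM : ((1 : Matrix (Fin n) (Fin n) ℝ) - (1 / l) • (A * Aᵀ)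
      + (S * B) * R⁻¹ * (S * B)ᵀ).PosDef := hD1.add_posSemidef hD2
  set W : Matrix (Fin n) (Fin n) ℝ := B * R⁻¹ * Bᵀ - (1 / l) • (Ξ * Ξᵀ) with hWdef
  have hexp : (1 : Matrix (Fin n) (Fin n) ℝ) + P * B * R⁻¹ * Bᵀ - (1 / l) • (P * Ξ * Ξᵀ)
      = 1 + S * (S * W) := by
    rw [← Matrix.mul_assoc, hSS, hWdef]
    simp only [Matrix.mul_sub, Matrix.mul_smul, Matrix.mul_assoc]
    abel
  have hswap : (1 : Matrix (Fin n) (Fin n) ℝ) + (S * W) * S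
      = 1 - (1 / l) • (A * Aᵀ) + (S * B) * R⁻¹ * (S * B)ᵀ := by
    rw [hWdef, hAdef]
    simp only [Matrix.sub_mul, Matrix.mul_sub, Matrix.smul_mul, Matrix.mul_smul,
      Matrix.transpose_mul, hSsymm, Matrix.mul_assoc]
    abel
  rw [Matrix.isUnit_iff_isUnit_det, hexp, Matrix.det_one_add_mul_comm, hswap]
  exact hM.det_pos.ne'.isUnit
end

section
/- Let P ∈ ℝ^{n×n} be symmetric positive semidefinite, Q ∈ ℝ^{n×n} symmetric positive semidefinite, R ∈ ℝ^{m×m} symmetric positive definite, A ∈ ℝ^{n×n}, B ∈ ℝ^{n×m}, Ξ ∈ ℝ^{n×k}, λ > λmax(ΞᵀPΞ), z ∈ ℝ, and let ŵ⁽¹⁾, …, ŵ⁽ᴺ⁾ ∈ ℝᵏ satisfy Σᵢ ŵ⁽ⁱ⁾ = 0; put Σ := (1/N) Σᵢ ŵ⁽ⁱ⁾ (ŵ⁽ⁱ⁾)ᵀ. Then for every x ∈ ℝⁿ, xᵀQx + inf_{u ∈ ℝᵐ} [ uᵀRu + (1/N) Σᵢ sup_{w ∈ ℝᵏ} { (Ax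 + Bu + Ξw)ᵀ P (Ax + Bu + Ξw) + z − λ‖ŵ⁽ⁱ⁾ − w‖² } ] = xᵀ P₋ x + z₋, where P₋ := Q + Aᵀ ( I + P B R⁻¹ Bᵀ − (1/λ) P Ξ Ξᵀ )⁻¹ P A and z₋ := z + tr[ ( I − (1/λ) Ξᵀ P Ξ )⁻¹ Ξᵀ P Ξ Σ ]. -/
open Matrix

variable {a b k m N : ℕ}

lemma bell_dtm (T : Matrix (Fin a) (Fin b) ℝ) (v : Fin a → ℝ) (w : Fin b → ℝ) :
    (T *ᵥ w) ⬝ᵥ v = w ⬝ᵥ (Tᵀ *ᵥ v) := by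
  rw [dotProduct_comm, dotProduct_mulVec, ← Matrix.mulVec_transpose, dotProduct_comm]

lemma bell_dot_sum (a : Fin k → ℝ) (v : Fin N → Fin k → ℝ) :
    ∑ i, a ⬝ᵥ v i = a ⬝ᵥ (∑ i, v i) := by
  simp [dotProduct, Finset.mul_sum, Finset.sum_apply]
  rw [Finset.sum_comm]

lemma bell_trace_vecMulVec (T : Matrix (Fin k) (Fin k) ℝ) (u v : Fin k → ℝ) :
    (T * vecMulVec u v).trace = v ⬝ᵥ (T *ᵥ u) := by
  simp only [Matrix.trace, Matrix.diag, Matrix.mul_apply, vecMulVec_apply, dotProduct,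
    Matrix.mulVec, Finset.mul_sum, Finset.sum_mul]
  exact Finset.sum_congr rfl fun i _ => Finset.sum_congr rfl fun j _ => by ring

lemma bell_psd_unit_posDef (M : Matrix (Fin k) (Fin k) ℝ) (h1 : M.PosSemidef)
    (h2 : IsUnit M.det) : M.PosDef := by
  refine .of_dotProduct_mulVec_pos h1.1 (fun x hx => ?_)
  rcases (h1.dotProduct_mulVec_nonneg x).lt_or_eq with h | h
  · exact h
  · exfalso
    have h0 : M *ᵥ x = 0 := (h1.dotProduct_mulVec_zero_iff x).1 h.symm
    have : x = 0 := by
      have := congrArg (fun v => M⁻¹ *ᵥ v) h0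
      simpa [Matrix.mulVec_mulVec, Matrix.nonsing_inv_mul _ h2] using this
    exact hx this

lemma bell_sup_quad (M : Matrix (Fin k) (Fin k) ℝ) (hM : M.PosDef) (b : Fin k → ℝ) (c : ℝ) :
    (⨆ w : Fin k → ℝ, (c + 2 * (b ⬝ᵥ w) - w ⬝ᵥ (M *ᵥ w))) = c + b ⬝ᵥ (M⁻¹ *ᵥ b) := by
  have hdet : IsUnit M.det := hM.det_pos.ne'.isUnit
  have hMs : Mᵀ = M := by
    rw [← Matrix.conjTranspose_eq_transpose_of_trivial]; exact hM.isHermitian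
  set a : Fin k → ℝ := M⁻¹ *ᵥ b with ha
  have hMa : M *ᵥ a = b := by
    rw [ha, Matrix.mulVec_mulVec, Matrix.mul_nonsing_inv _ hdet, Matrix.one_mulVec]
  have key : ∀ w : Fin k → ℝ,
      (w - a) ⬝ᵥ (M *ᵥ (w - a)) = w ⬝ᵥ (M *ᵥ w) - 2 * (b ⬝ᵥ w) + b ⬝ᵥ a := by
    intro w
    have h1 : a ⬝ᵥ (M *ᵥ w) = b ⬝ᵥ w := by
      rw [dotProduct_comm, bell_dtm, hMs, hMa]; exact dotProduct_comm w b
    have h2 : w ⬝ᵥ (M *ᵥ a) = b ⬝ᵥ w := by rw [hMa]; exact dotProduct_comm w b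
    have h3 : a ⬝ᵥ (M *ᵥ a) = b ⬝ᵥ a := by rw [hMa]; exact dotProduct_comm a b
    simp only [Matrix.mulVec_sub, dotProduct_sub, sub_dotProduct, h1, h2, h3]
    ring
  have hub : ∀ w : Fin k → ℝ, c + 2 * (b ⬝ᵥ w) - w ⬝ᵥ (M *ᵥ w) ≤ c + b ⬝ᵥ a := by
    intro w
    have h0 : 0 ≤ (w - a) ⬝ᵥ (M *ᵥ (w - a)) := by simpa using hM.posSemidef.dotProduct_mulVec_nonneg (w - a)
    rw [key w] at h0; linarith
  have hval : c + 2 * (b ⬝ᵥ a) - a ⬝ᵥ (M *ᵥ a) = c + b ⬝ᵥ a := by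
    have h3 : a ⬝ᵥ (M *ᵥ a) = b ⬝ᵥ a := by rw [hMa]; exact dotProduct_comm a b
    rw [h3]; ring
  apply le_antisymm
  · exact ciSup_le hub
  · calc c + b ⬝ᵥ (M⁻¹ *ᵥ b) = c + 2 * (b ⬝ᵥ a) - a ⬝ᵥ (M *ᵥ a) := hval.symm
      _ ≤ _ := le_ciSup ⟨c + b ⬝ᵥ a, by rintro _ ⟨w, rfl⟩; exact hub w⟩ a

lemma bell_inf_quad (H : Matrix (Fin m) (Fin m) ℝ) (hH : H.PosDef) (b : Fin m → ℝ) (c : ℝ) :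
    (⨅ u : Fin m → ℝ, (u ⬝ᵥ (H *ᵥ u) + 2 * (b ⬝ᵥ u) + c)) = c - b ⬝ᵥ (H⁻¹ *ᵥ b) := by
  have hdet : IsUnit H.det := hH.det_pos.ne'.isUnit
  have hHs : Hᵀ = H := by
    rw [← Matrix.conjTranspose_eq_transpose_of_trivial]; exact hH.isHermitian
  set a : Fin m → ℝ := H⁻¹ *ᵥ b with ha
  have hHa : H *ᵥ a = b := by
    rw [ha, Matrix.mulVec_mulVec, Matrix.mul_nonsing_inv _ hdet, Matrix.one_mulVec]
  have key : ∀ u : Fin m → ℝ,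
      (u + a) ⬝ᵥ (H *ᵥ (u + a)) = u ⬝ᵥ (H *ᵥ u) + 2 * (b ⬝ᵥ u) + b ⬝ᵥ a := by
    intro u
    have h1 : a ⬝ᵥ (H *ᵥ u) = b ⬝ᵥ u := by
      rw [dotProduct_comm, bell_dtm, hHs, hHa]; exact dotProduct_comm u b
    have h2 : u ⬝ᵥ (H *ᵥ a) = b ⬝ᵥ u := by rw [hHa]; exact dotProduct_comm u b
    have h3 : a ⬝ᵥ (H *ᵥ a) = b ⬝ᵥ a := by rw [hHa]; exact dotProduct_comm a b
    simp only [Matrix.mulVec_add, dotProduct_add, add_dotProduct, h1, h2, h3]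
    ring
  have hlb : ∀ u : Fin m → ℝ, c - b ⬝ᵥ a ≤ u ⬝ᵥ (H *ᵥ u) + 2 * (b ⬝ᵥ u) + c := by
    intro u
    have h0 : 0 ≤ (u + a) ⬝ᵥ (H *ᵥ (u + a)) := by simpa using hH.posSemidef.dotProduct_mulVec_nonneg (u + a)
    rw [key u] at h0; linarith
  have hval : (-a) ⬝ᵥ (H *ᵥ (-a)) + 2 * (b ⬝ᵥ (-a)) + c = c - b ⬝ᵥ a := by
    have h3 : a ⬝ᵥ (H *ᵥ a) = b ⬝ᵥ a := by rw [hHa]; exact dotProduct_comm a b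
    simp only [Matrix.mulVec_neg, dotProduct_neg, neg_dotProduct, neg_neg, h3]
    ring
  apply le_antisymm
  · calc (⨅ u : Fin m → ℝ, (u ⬝ᵥ (H *ᵥ u) + 2 * (b ⬝ᵥ u) + c))
        ≤ (-a) ⬝ᵥ (H *ᵥ (-a)) + 2 * (b ⬝ᵥ (-a)) + c :=
          ciInf_le ⟨c - b ⬝ᵥ a, by rintro _ ⟨u, rfl⟩; exact hlb u⟩ (-a)
      _ = c - b ⬝ᵥ (H⁻¹ *ᵥ b) := hval
  · exact le_ciInf hlb

/-- One-step Bellman recursion: for mean-zero samples with empirical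
second moment `Σ`,
`xᵀQx + inf_u [ uᵀRu + (1/N) Σᵢ sup_w { (Ax+Bu+Ξw)ᵀP(Ax+Bu+Ξw) + z − λ‖ŵ⁽ⁱ⁾−w‖² } ]
  = xᵀP₋x + z₋`
with `P₋ = Q + Aᵀ(I + PBR⁻¹Bᵀ − (1/λ)PΞΞᵀ)⁻¹PA` and
`z₋ = z + tr[(I − (1/λ)ΞᵀPΞ)⁻¹ ΞᵀPΞ Σ]`. -/
theorem stmt_4 {n m k N : ℕ} (hn : 0 < n) (hm : 0 < m) (hk : 0 < k) (hN : 0 < N)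
    (P : Matrix (Fin n) (Fin n) ℝ) (hP : P.PosSemidef)
    (Q : Matrix (Fin n) (Fin n) ℝ) (hQ : Q.PosSemidef)
    (R : Matrix (Fin m) (Fin m) ℝ) (hR : R.PosDef)
    (A : Matrix (Fin n) (Fin n) ℝ) (B : Matrix (Fin n) (Fin m) ℝ)
    (Ξ : Matrix (Fin n) (Fin k) ℝ)
    (l : ℝ) (hlmax : ∀ μ ∈ spectrum ℝ (Ξᵀ * P * Ξ), μ < l)
    (z : ℝ) (what : Fin N → Fin k → ℝ) (hmean : ∑ i : Fin N, what i = 0)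
    (Sigmat : Matrix (Fin k) (Fin k) ℝ)
    (hSig : Sigmat = (1 / (N : ℝ)) • ∑ i : Fin N, vecMulVec (what i) (what i))
    (Pm : Matrix (Fin n) (Fin n) ℝ)
    (hPm : Pm = Q + Aᵀ *
      ((1 : Matrix (Fin n) (Fin n) ℝ) + P * B * R⁻¹ * Bᵀ - (1 / l) • (P * Ξ * Ξᵀ))⁻¹ * P * A)
    (zm : ℝ)
    (hzm : zm = z + Matrix.trace
      (((1 : Matrix (Fin k) (Fin k) ℝ) - (1 / l) • (Ξᵀ * P * Ξ))⁻¹ * (Ξᵀ * P * Ξ) * Sigmat)) :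
    ∀ x : Fin n → ℝ,
      x ⬝ᵥ (Q *ᵥ x) +
        (⨅ u : Fin m → ℝ, (u ⬝ᵥ (R *ᵥ u) +
          (1 / (N : ℝ)) * ∑ i : Fin N, ⨆ w : Fin k → ℝ,
            ((A *ᵥ x + B *ᵥ u + Ξ *ᵥ w) ⬝ᵥ (P *ᵥ (A *ᵥ x + B *ᵥ u + Ξ *ᵥ w)) + z
              - l * ((what i - w) ⬝ᵥ (what i - w)))))
      = x ⬝ᵥ (Pm *ᵥ x) + zm := by
  intro x
  have hPsym : Pᵀ = P := by
    rw [← Matrix.conjTranspose_eq_transpose_of_trivial]; exact hP.1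
  set S := Ξᵀ * P * Ξ with hSdef
  have hSpsd : S.PosSemidef := by
    have := hP.mul_mul_conjTranspose_same Ξᵀ
    simpa [Matrix.conjTranspose_eq_transpose_of_trivial] using this
  have hSherm : S.IsHermitian := hSpsd.1
  have l_pos : 0 < l :=
    lt_of_le_of_lt (hSpsd.eigenvalues_nonneg ⟨0, hk⟩)
      (hlmax _ (hSherm.eigenvalues_mem_spectrum_real _))
  set M := l • (1 : Matrix (Fin k) (Fin k) ℝ) - S with hMdef
  have hSsym : Sᵀ = S := by
    rw [← Matrix.conjTranspose_eq_transpose_of_trivial]; exact hSherm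
  have hMherm : M.IsHermitian := by
    unfold Matrix.IsHermitian
    simp [hMdef, Matrix.conjTranspose_smul, Matrix.conjTranspose_eq_transpose_of_trivial, hSsym]
  have heigM : ∀ i, 0 < hMherm.eigenvalues i := by
    intro i
    by_contra hle
    push_neg at hle
    have hmem : (hMherm.eigenvalues i : ℝ) ∈ spectrum ℝ M :=
      hMherm.eigenvalues_mem_spectrum_real i
    have hmem2 : (l - hMherm.eigenvalues i) ∈ spectrum ℝ S := by
      rw [spectrum.mem_iff] at hmem ⊢
      intro hu
      apply hmem
      have he : algebraMap ℝ (Matrix (Fin k) (Fin k) ℝ) (hMherm.eigenvalues i) - M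
          = -(algebraMap ℝ (Matrix (Fin k) (Fin k) ℝ) (l - hMherm.eigenvalues i) - S) := by
        simp only [Algebra.algebraMap_eq_smul_one, hMdef, sub_smul]
        abel
      rw [he]
      exact hu.neg
    have := hlmax _ hmem2
    linarith
  have hMpsd : M.PosSemidef := hMherm.posSemidef_iff_eigenvalues_nonneg.2 (Pi.le_def.2 fun i => (heigM i).le)
  have hMdet : IsUnit M.det := by
    have : (0 : ℝ) < M.det := by
      rw [hMherm.det_eq_prod_eigenvalues]
      exact_mod_cast Finset.prod_pos fun i (_ : i ∈ Finset.univ) => heigM i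
    exact this.ne'.isUnit
  have hM : M.PosDef := bell_psd_unit_posDef M hMpsd hMdet
  have hMM : M * M⁻¹ = 1 := Matrix.mul_nonsing_inv _ hMdet
  have hMM' : M⁻¹ * M = 1 := Matrix.nonsing_inv_mul _ hMdet
  have hMsym : Mᵀ = M := by
    rw [← Matrix.conjTranspose_eq_transpose_of_trivial]; exact hMherm
  have hMinvsym : (M⁻¹)ᵀ = M⁻¹ := by
    rw [Matrix.transpose_nonsing_inv, hMsym]
  set G := P + P * Ξ * M⁻¹ * (Ξᵀ * P) with hGdef
  have hGsym : Gᵀ = G := by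
    simp [hGdef, Matrix.transpose_add, Matrix.transpose_mul, hPsym, hMinvsym,
      Matrix.transpose_transpose, Matrix.mul_assoc]
  have hGpsd : G.PosSemidef := by
    have h1 := (hM.inv.posSemidef).mul_mul_conjTranspose_same (P * Ξ)
    have h2 : (P * Ξ)ᴴ = Ξᵀ * P := by
      simp [Matrix.conjTranspose_eq_transpose_of_trivial, Matrix.transpose_mul, hPsym]
    rw [h2] at h1
    exact hP.add h1
  set H := R + Bᵀ * G * B with hHdef
  have hH : H.PosDef := by
    have h1 := hGpsd.mul_mul_conjTranspose_same Bᵀ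
    have h2 : (Bᵀ)ᴴ = B := by
      simp [Matrix.conjTranspose_eq_transpose_of_trivial]
    rw [h2] at h1
    exact hR.add_posSemidef h1
  have hHdet : IsUnit H.det := hH.det_pos.ne'.isUnit
  have hHH : H * H⁻¹ = 1 := Matrix.mul_nonsing_inv _ hHdet
  have hRdet : IsUnit R.det := hR.det_pos.ne'.isUnit
  have hRR' : R⁻¹ * R = 1 := Matrix.nonsing_inv_mul _ hRdet
  have hlne : l ≠ 0 := l_pos.ne'
  have hSM : S * M⁻¹ = l • M⁻¹ - 1 := by
    have hs : S = l • (1 : Matrix (Fin k) (Fin k) ℝ) - M := by rw [hMdef]; abel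
    rw [hs, Matrix.sub_mul, smul_mul_assoc, Matrix.one_mul, hMM]
  set D := (1 : Matrix (Fin n) (Fin n) ℝ) - (1/l) • (P * Ξ * Ξᵀ) with hDdef
  have hDG : D * G = P := by
    have key : P * Ξ * Ξᵀ * (P * Ξ * M⁻¹ * (Ξᵀ * P))
        = P * Ξ * ((Ξᵀ * P * Ξ) * M⁻¹) * (Ξᵀ * P) := by
      simp only [Matrix.mul_assoc]
    rw [← hSdef, hSM] at key
    rw [hDdef, hGdef, Matrix.sub_mul, Matrix.one_mul, smul_mul_assoc, Matrix.mul_add, key]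
    simp only [Matrix.mul_sub, Matrix.sub_mul, mul_smul_comm, smul_mul_assoc, Matrix.mul_one,
      smul_sub, smul_add, smul_smul, one_div, inv_mul_cancel₀ hlne, one_smul, Matrix.mul_assoc]
    simp only [Matrix.mul_smul, Matrix.smul_mul, smul_smul]
    simp only [inv_mul_cancel₀ hlne, mul_one, neg_smul, one_smul, neg_mul, mul_neg,
      neg_one_mul]
    abel
  set E := (1 : Matrix (Fin n) (Fin n) ℝ) + G * B * R⁻¹ * Bᵀ with hEdef
  set K := G - G * B * H⁻¹ * (Bᵀ * G) with hKdef
  have hBGB : Bᵀ * (G * B) = H - R := by rw [← Matrix.mul_assoc, hHdef]; abel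
  have key2 : G * (B * (R⁻¹ * (Bᵀ * (G * (B * (H⁻¹ * (Bᵀ * G)))))))
      = G * (B * ((R⁻¹ - H⁻¹) * (Bᵀ * G))) := by
    calc G * (B * (R⁻¹ * (Bᵀ * (G * (B * (H⁻¹ * (Bᵀ * G)))))))
        = G * (B * (R⁻¹ * ((Bᵀ * (G * B)) * (H⁻¹ * (Bᵀ * G))))) := by
          simp only [Matrix.mul_assoc]
      _ = G * (B * (R⁻¹ * ((H - R) * (H⁻¹ * (Bᵀ * G))))) := by rw [hBGB]
      _ = G * (B * ((R⁻¹ - H⁻¹) * (Bᵀ * G))) := by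
          rw [Matrix.sub_mul, ← Matrix.mul_assoc H, hHH, Matrix.one_mul, Matrix.mul_sub,
            ← Matrix.mul_assoc R⁻¹ R, hRR', Matrix.one_mul, Matrix.sub_mul]
  have hEK : E * K = G := by
    rw [hEdef, hKdef]
    simp only [Matrix.add_mul, Matrix.one_mul, Matrix.mul_sub, Matrix.sub_mul,
      Matrix.mul_assoc]
    rw [key2]
    simp only [Matrix.sub_mul, Matrix.mul_sub, Matrix.mul_assoc]
    abel
  have hDdet : IsUnit D.det := by
    have h1 : D = 1 + (-(1/l) • (P * Ξ)) * Ξᵀ := by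
      rw [hDdef, Matrix.smul_mul, neg_smul, ← sub_eq_add_neg]
    have h2 : D.det = ((1/l) • M).det := by
      rw [h1, Matrix.det_one_add_mul_comm]
      congr 1
      rw [hMdef, smul_sub, smul_smul, one_div, inv_mul_cancel₀ hlne, one_smul]
      rw [Matrix.mul_smul, neg_smul, ← sub_eq_add_neg, hSdef, Matrix.mul_assoc]
    rw [h2, Matrix.det_smul]
    exact (IsUnit.pow _ (isUnit_iff_ne_zero.2 (by positivity : (1/l : ℝ) ≠ 0))).mul hMdet
  have hEdet : IsUnit E.det := by
    have h1 : E = 1 + (G * B) * (R⁻¹ * Bᵀ) := by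
      rw [hEdef]; simp only [Matrix.mul_assoc]
    have h2 : E.det = (R⁻¹ * H).det := by
      rw [h1, Matrix.det_one_add_mul_comm]
      congr 1
      rw [hHdef, Matrix.mul_add, ← Matrix.mul_assoc, hRR', ← Matrix.mul_assoc,
        Matrix.mul_assoc R⁻¹ Bᵀ G]
    rw [h2, Matrix.det_mul, Matrix.det_nonsing_inv]
    rw [Ring.inverse_eq_inv]
    exact (hRdet.inv).mul hHdet
  have hDE : (1 : Matrix (Fin n) (Fin n) ℝ) + P * B * R⁻¹ * Bᵀ - (1/l) • (P * Ξ * Ξᵀ)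
      = D * E := by
    have h1 : D * (G * (B * (R⁻¹ * Bᵀ))) = P * (B * (R⁻¹ * Bᵀ)) := by
      rw [← Matrix.mul_assoc, hDG]
    rw [hEdef, Matrix.mul_add, Matrix.mul_one]
    rw [show G * B * R⁻¹ * Bᵀ = G * (B * (R⁻¹ * Bᵀ)) by simp only [Matrix.mul_assoc]]
    rw [h1, hDdef]
    simp only [Matrix.mul_assoc]
    abel
  have hKW : ((1 : Matrix (Fin n) (Fin n) ℝ) + P * B * R⁻¹ * Bᵀ - (1/l) • (P * Ξ * Ξᵀ))⁻¹ * P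
      = K := by
    rw [hDE, Matrix.mul_inv_rev, Matrix.mul_assoc]
    have hDP : D⁻¹ * P = G := by
      rw [← hDG, ← Matrix.mul_assoc, Matrix.nonsing_inv_mul _ hDdet, Matrix.one_mul]
    have hEG : E⁻¹ * G = K := by
      rw [← hEK, ← Matrix.mul_assoc, Matrix.nonsing_inv_mul _ hEdet, Matrix.one_mul]
    rw [hDP, hEG]
  have hMS' : M⁻¹ * S = l • M⁻¹ - 1 := by
    have hs : S = l • (1 : Matrix (Fin k) (Fin k) ℝ) - M := by rw [hMdef]; abel
    rw [hs, Matrix.mul_sub, Matrix.mul_smul, Matrix.mul_one, hMM']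
  have hD0 : (1 : Matrix (Fin k) (Fin k) ℝ) - (1/l) • S = (1/l) • M := by
    rw [hMdef, smul_sub, smul_smul, one_div, inv_mul_cancel₀ hlne, one_smul]
  have hD0inv : ((1/l) • M)⁻¹ = l • M⁻¹ := by
    apply Matrix.inv_eq_left_inv
    rw [Matrix.smul_mul, Matrix.mul_smul, hMM', smul_smul, mul_one_div,
      div_self hlne, one_smul]
  set T := (l*l) • M⁻¹ - l • (1 : Matrix (Fin k) (Fin k) ℝ) with hTdef
  have hT : ((1 : Matrix (Fin k) (Fin k) ℝ) - (1/l) • S)⁻¹ * S = T := by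
    rw [hD0, hD0inv, Matrix.smul_mul, hMS', smul_sub, smul_smul, hTdef]
  have hzm' : zm = z + (T * Sigmat).trace := by
    rw [hzm, hT]
  have hNne : (N:ℝ) ≠ 0 := Nat.cast_ne_zero.2 hN.ne'
  have hSigsum : ∑ i : Fin N, vecMulVec (what i) (what i) = (N : ℝ) • Sigmat := by
    rw [hSig, smul_smul, mul_one_div, div_self hNne, one_smul]
  have csym : ∀ v w' : Fin k → ℝ, v ⬝ᵥ (M⁻¹ *ᵥ w') = w' ⬝ᵥ (M⁻¹ *ᵥ v) := by
    intro v w'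
    rw [dotProduct_comm, bell_dtm, hMinvsym]
  have hGy : ∀ y' : Fin n → ℝ,
      y' ⬝ᵥ (P *ᵥ y') + ((Ξᵀ * P) *ᵥ y') ⬝ᵥ (M⁻¹ *ᵥ ((Ξᵀ * P) *ᵥ y')) = y' ⬝ᵥ (G *ᵥ y') := by
    intro y'
    have e1 : ((Ξᵀ * P) *ᵥ y') ⬝ᵥ (M⁻¹ *ᵥ ((Ξᵀ * P) *ᵥ y'))
        = y' ⬝ᵥ ((P * Ξ * M⁻¹ * (Ξᵀ * P)) *ᵥ y') := by
      rw [bell_dtm, Matrix.transpose_mul, hPsym, Matrix.transpose_transpose,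
        Matrix.mulVec_mulVec, Matrix.mulVec_mulVec]
    rw [e1, hGdef, Matrix.add_mulVec, dotProduct_add]
  have hsup : ∀ (u : Fin m → ℝ) (i : Fin N),
      (⨆ w : Fin k → ℝ,
        ((A *ᵥ x + B *ᵥ u + Ξ *ᵥ w) ⬝ᵥ (P *ᵥ (A *ᵥ x + B *ᵥ u + Ξ *ᵥ w)) + z
          - l * ((what i - w) ⬝ᵥ (what i - w))))
      = ((A *ᵥ x + B *ᵥ u) ⬝ᵥ (P *ᵥ (A *ᵥ x + B *ᵥ u)) + z - l * (what i ⬝ᵥ what i))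
        + ((Ξᵀ * P) *ᵥ (A *ᵥ x + B *ᵥ u) + l • what i) ⬝ᵥ
            (M⁻¹ *ᵥ ((Ξᵀ * P) *ᵥ (A *ᵥ x + B *ᵥ u) + l • what i)) := by
    intro u i
    set y := A *ᵥ x + B *ᵥ u with hy
    have expand : ∀ w : Fin k → ℝ,
        (y + Ξ *ᵥ w) ⬝ᵥ (P *ᵥ (y + Ξ *ᵥ w)) + z - l * ((what i - w) ⬝ᵥ (what i - w))
        = (y ⬝ᵥ (P *ᵥ y) + z - l * (what i ⬝ᵥ what i))
          + 2 * (((Ξᵀ * P) *ᵥ y + l • what i) ⬝ᵥ w) - w ⬝ᵥ (M *ᵥ w) := by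
      intro w
      have c1 : (Ξ *ᵥ w) ⬝ᵥ (P *ᵥ y) = ((Ξᵀ * P) *ᵥ y) ⬝ᵥ w := by
        rw [bell_dtm, Matrix.mulVec_mulVec, dotProduct_comm]
      have c2 : y ⬝ᵥ (P *ᵥ (Ξ *ᵥ w)) = ((Ξᵀ * P) *ᵥ y) ⬝ᵥ w := by
        rw [Matrix.mulVec_mulVec, dotProduct_comm, bell_dtm, Matrix.transpose_mul, hPsym,
          dotProduct_comm]
      have c3 : (Ξ *ᵥ w) ⬝ᵥ (P *ᵥ (Ξ *ᵥ w)) = w ⬝ᵥ (S *ᵥ w) := by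
        rw [bell_dtm, Matrix.mulVec_mulVec, Matrix.mulVec_mulVec, ← hSdef]
      have c4 : w ⬝ᵥ (M *ᵥ w) = l * (w ⬝ᵥ w) - w ⬝ᵥ (S *ᵥ w) := by
        rw [hMdef, Matrix.sub_mulVec, Matrix.smul_mulVec, Matrix.one_mulVec,
          dotProduct_sub, dotProduct_smul, smul_eq_mul]
      have c5 : w ⬝ᵥ what i = what i ⬝ᵥ w := dotProduct_comm _ _
      simp only [Matrix.mulVec_add, dotProduct_add, add_dotProduct, dotProduct_sub,
        sub_dotProduct, smul_dotProduct, smul_eq_mul, c1, c2, c3, c4, c5]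
      ring
    calc _ = (⨆ w : Fin k → ℝ,
          ((y ⬝ᵥ (P *ᵥ y) + z - l * (what i ⬝ᵥ what i))
            + 2 * (((Ξᵀ * P) *ᵥ y + l • what i) ⬝ᵥ w) - w ⬝ᵥ (M *ᵥ w))) :=
        iSup_congr expand
      _ = _ := bell_sup_quad M hM _ _
  have hsum : ∀ u : Fin m → ℝ,
      (1 / (N:ℝ)) * ∑ i : Fin N,
        (((A *ᵥ x + B *ᵥ u) ⬝ᵥ (P *ᵥ (A *ᵥ x + B *ᵥ u)) + z - l * (what i ⬝ᵥ what i))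
          + ((Ξᵀ * P) *ᵥ (A *ᵥ x + B *ᵥ u) + l • what i) ⬝ᵥ
              (M⁻¹ *ᵥ ((Ξᵀ * P) *ᵥ (A *ᵥ x + B *ᵥ u) + l • what i)))
      = (A *ᵥ x + B *ᵥ u) ⬝ᵥ (G *ᵥ (A *ᵥ x + B *ᵥ u)) + zm := by
    intro u
    set y := A *ᵥ x + B *ᵥ u with hy
    set a := (Ξᵀ * P) *ᵥ y with ha2
    have term : ∀ i : Fin N,
        ((y ⬝ᵥ (P *ᵥ y) + z - l * (what i ⬝ᵥ what i))
          + (a + l • what i) ⬝ᵥ (M⁻¹ *ᵥ (a + l • what i)))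
        = (y ⬝ᵥ (P *ᵥ y) + a ⬝ᵥ (M⁻¹ *ᵥ a) + z)
          + (2*l) * ((M⁻¹ *ᵥ a) ⬝ᵥ what i)
          + what i ⬝ᵥ (T *ᵥ what i) := by
      intro i
      have e1 : a ⬝ᵥ (M⁻¹ *ᵥ what i) = (M⁻¹ *ᵥ a) ⬝ᵥ what i := by
        rw [csym, dotProduct_comm]
      have e2 : what i ⬝ᵥ (M⁻¹ *ᵥ a) = (M⁻¹ *ᵥ a) ⬝ᵥ what i := dotProduct_comm _ _
      have d2 : what i ⬝ᵥ (T *ᵥ what i)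
          = l*l*(what i ⬝ᵥ (M⁻¹ *ᵥ what i)) - l * (what i ⬝ᵥ what i) := by
        rw [hTdef, Matrix.sub_mulVec, Matrix.smul_mulVec, Matrix.smul_mulVec,
          Matrix.one_mulVec, dotProduct_sub, dotProduct_smul, dotProduct_smul,
          smul_eq_mul, smul_eq_mul]
      rw [d2]
      simp only [Matrix.mulVec_add, Matrix.mulVec_smul, dotProduct_add, add_dotProduct,
        dotProduct_smul, smul_dotProduct, smul_eq_mul, e1, e2]
      ring
    rw [Finset.sum_congr rfl (fun i _ => term i)]
    rw [Finset.sum_add_distrib, Finset.sum_add_distrib, Finset.sum_const,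
      Finset.card_univ, Fintype.card_fin]
    have cross : ∑ i : Fin N, (2*l) * ((M⁻¹ *ᵥ a) ⬝ᵥ what i) = 0 := by
      rw [← Finset.mul_sum, bell_dot_sum, hmean, dotProduct_zero, mul_zero]
    rw [cross]
    have quadt : ∑ i : Fin N, what i ⬝ᵥ (T *ᵥ what i) = (N:ℝ) * (T * Sigmat).trace := by
      rw [Finset.sum_congr rfl
        (fun i _ => (bell_trace_vecMulVec T (what i) (what i)).symm),
        ← Matrix.trace_sum, ← Matrix.mul_sum, hSigsum, Matrix.mul_smul,
        Matrix.trace_smul, smul_eq_mul]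
    rw [quadt]
    have base := hGy y
    rw [← ha2] at base
    rw [nsmul_eq_mul, hzm']
    rw [show y ⬝ᵥ (P *ᵥ y) + a ⬝ᵥ (M⁻¹ *ᵥ a) + z = y ⬝ᵥ (G *ᵥ y) + z by
      rw [← base]]
    field_simp
    ring
  have hinner : ∀ u : Fin m → ℝ,
      (u ⬝ᵥ (R *ᵥ u) +
          (1 / (N : ℝ)) * ∑ i : Fin N, ⨆ w : Fin k → ℝ,
            ((A *ᵥ x + B *ᵥ u + Ξ *ᵥ w) ⬝ᵥ (P *ᵥ (A *ᵥ x + B *ᵥ u + Ξ *ᵥ w)) + z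
              - l * ((what i - w) ⬝ᵥ (what i - w))))
      = u ⬝ᵥ (H *ᵥ u) + 2 * (((Bᵀ * (G * A)) *ᵥ x) ⬝ᵥ u)
        + (x ⬝ᵥ ((Aᵀ * (G * A)) *ᵥ x) + zm) := by
    intro u
    rw [Finset.sum_congr rfl (fun i _ => hsup u i), hsum u]
    have e4 : (A *ᵥ x) ⬝ᵥ (G *ᵥ (B *ᵥ u)) = ((Bᵀ * (G * A)) *ᵥ x) ⬝ᵥ u := by
      rw [dotProduct_comm, Matrix.mulVec_mulVec, bell_dtm, Matrix.transpose_mul, hGsym,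
        Matrix.mulVec_mulVec, dotProduct_comm, Matrix.mul_assoc]
    have e5 : (B *ᵥ u) ⬝ᵥ (G *ᵥ (A *ᵥ x)) = ((Bᵀ * (G * A)) *ᵥ x) ⬝ᵥ u := by
      rw [bell_dtm, Matrix.mulVec_mulVec, Matrix.mulVec_mulVec, Matrix.mul_assoc,
        dotProduct_comm]
    have e6 : (B *ᵥ u) ⬝ᵥ (G *ᵥ (B *ᵥ u)) = u ⬝ᵥ ((Bᵀ * G * B) *ᵥ u) := by
      rw [bell_dtm, Matrix.mulVec_mulVec, Matrix.mulVec_mulVec]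
    have e7 : (A *ᵥ x) ⬝ᵥ (G *ᵥ (A *ᵥ x)) = x ⬝ᵥ ((Aᵀ * (G * A)) *ᵥ x) := by
      rw [bell_dtm, Matrix.mulVec_mulVec, Matrix.mulVec_mulVec, Matrix.mul_assoc]
    have e8 : u ⬝ᵥ (H *ᵥ u) = u ⬝ᵥ (R *ᵥ u) + u ⬝ᵥ ((Bᵀ * G * B) *ᵥ u) := by
      rw [hHdef, Matrix.add_mulVec, dotProduct_add]
    simp only [Matrix.mulVec_add, dotProduct_add, add_dotProduct, e4, e5, e6, e7, e8]
    ring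
  have hInf := iInf_congr hinner
  rw [hInf, bell_inf_quad H hH _ _]
  have f1 : ((Bᵀ * (G * A)) *ᵥ x) ⬝ᵥ (H⁻¹ *ᵥ ((Bᵀ * (G * A)) *ᵥ x))
      = x ⬝ᵥ ((Aᵀ * G * B * (H⁻¹ * (Bᵀ * (G * A)))) *ᵥ x) := by
    rw [bell_dtm, Matrix.transpose_mul, Matrix.transpose_mul, Matrix.transpose_transpose,
      hGsym, Matrix.mulVec_mulVec, Matrix.mulVec_mulVec, Matrix.mul_assoc]
  have f2 : Pm = Q + Aᵀ * (G * A) - Aᵀ * G * B * (H⁻¹ * (Bᵀ * (G * A))) := by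
    rw [hPm]
    rw [show Aᵀ * ((1 : Matrix (Fin n) (Fin n) ℝ) + P * B * R⁻¹ * Bᵀ
          - (1/l) • (P * Ξ * Ξᵀ))⁻¹ * P * A
        = Aᵀ * ((((1 : Matrix (Fin n) (Fin n) ℝ) + P * B * R⁻¹ * Bᵀ
          - (1/l) • (P * Ξ * Ξᵀ))⁻¹ * P) * A) by simp only [Matrix.mul_assoc]]
    rw [hKW, hKdef]
    simp only [Matrix.sub_mul, Matrix.mul_sub, Matrix.mul_assoc]
    abel
  rw [f1, f2, Matrix.sub_mulVec, Matrix.add_mulVec, dotProduct_sub, dotProduct_add]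
  ring
end

section
/- Let Q, P ∈ ℝ^{n×n} be symmetric positive semidefinite, R ∈ ℝ^{m×m} symmetric positive definite, A ∈ ℝ^{n×n}, B ∈ ℝ^{n×m}, Ξ ∈ ℝ^{n×k}, and λ > λmax(ΞᵀPΞ). Then the matrix P₋ := Q + Aᵀ ( I + P B R⁻¹ Bᵀ − (1/λ) P Ξ Ξᵀ )⁻¹ P A is well-defined (the inverse exists), symmetric, and positive semidefinite. -/
open Matrix

private lemma aux_conj_posDef {p : Type*} [Fintype p] [DecidableEq p]
    {C B : Matrix p p ℝ} (hC : C.PosDef) (hB : IsUnit B) :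
    (Bᴴ * C * B).PosDef := by
  refine Matrix.PosDef.of_dotProduct_mulVec_pos
    (Matrix.isHermitian_conjTranspose_mul_mul B hC.1) fun x hx => ?_
  have hy : B *ᵥ x ≠ 0 :=
    ((Matrix.mulVec_injective_iff_isUnit.mpr hB).ne_iff' (Matrix.mulVec_zero _)).2 hx
  simpa only [star_mulVec, dotProduct_mulVec, vecMul_vecMul] using hC.dotProduct_mulVec_pos hy

private lemma aux_smul_posDef {p : Type*} [Fintype p] {M : Matrix p p ℝ}
    (hM : M.PosDef) {c : ℝ} (hc : 0 < c) : (c • M).PosDef := by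
  refine Matrix.PosDef.of_dotProduct_mulVec_pos ?_ fun x hx => ?_
  · have := hM.1
    unfold Matrix.IsHermitian at this ⊢
    rw [Matrix.conjTranspose_smul, this]
    simp
  · have := hM.dotProduct_mulVec_pos hx
    rw [Matrix.smul_mulVec, dotProduct_smul, smul_eq_mul]
    positivity

private lemma aux_shift {p : Type*} [Fintype p] [DecidableEq p]
    {M : Matrix p p ℝ} (hM : M.IsHermitian) {l : ℝ}
    (h : ∀ μ ∈ spectrum ℝ M, μ < l) :
    (l • (1 : Matrix p p ℝ) - M).PosDef := by
  set U : Matrix p p ℝ := (hM.eigenvectorUnitary : Matrix p p ℝ) with hUdef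
  have hUU : U * star U = 1 := Matrix.mem_unitaryGroup_iff.mp hM.eigenvectorUnitary.2
  have hUnit : IsUnit U := ⟨Unitary.toUnits hM.eigenvectorUnitary, rfl⟩
  have hdiag : (Matrix.diagonal (fun i => l - hM.eigenvalues i)).PosDef :=
    Matrix.PosDef.diagonal fun i => sub_pos.2 (h _ (hM.eigenvalues_mem_spectrum_real i))
  have hsp : M = U * Matrix.diagonal hM.eigenvalues * star U := by
    simpa [Function.comp] using hM.spectral_theorem
  have key : U * Matrix.diagonal (fun i => l - hM.eigenvalues i) * star U
      = l • (1 : Matrix p p ℝ) - M := by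
    have hd : Matrix.diagonal (fun i => l - hM.eigenvalues i)
        = l • (1 : Matrix p p ℝ) - Matrix.diagonal hM.eigenvalues := by
      rw [Matrix.smul_one_eq_diagonal, ← Matrix.diagonal_sub]
    rw [hd, Matrix.mul_sub, Matrix.sub_mul, ← hsp, Matrix.mul_smul, Matrix.mul_one,
      Matrix.smul_mul, hUU]
  rw [← key]
  have := aux_conj_posDef hdiag hUnit.star
  simpa [Matrix.star_eq_conjTranspose] using this

private lemma aux_flip {N K : Type*} [Fintype N] [Fintype K] [DecidableEq N] [DecidableEq K]
    {C : Matrix N K ℝ} {l : ℝ} (hl : 0 < l)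
    (h : ((l • (1 : Matrix K K ℝ)) - Cᵀ * C).PosDef) :
    ((l • (1 : Matrix N N ℝ)) - C * Cᵀ).PosDef := by
  have herm : ((l • (1 : Matrix N N ℝ)) - C * Cᵀ).IsHermitian := by
    have h1 : (C * Cᵀ).IsHermitian := by
      simpa [Matrix.conjTranspose_eq_transpose_of_trivial] using
        Matrix.isHermitian_mul_conjTranspose_self C
    have h0 : (l • (1 : Matrix N N ℝ)).IsHermitian := by
      unfold Matrix.IsHermitian
      rw [Matrix.conjTranspose_smul, Matrix.conjTranspose_one]
      simp
    exact h0.sub h1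
  refine Matrix.PosDef.of_dotProduct_mulVec_pos herm fun x hx => ?_
  have ha : 0 < x ⬝ᵥ x := by
    simpa using dotProduct_star_self_pos_iff.mpr hx
  set y := Cᵀ *ᵥ x with hy
  have hxz : x ⬝ᵥ (C *ᵥ y) = y ⬝ᵥ y := by
    rw [Matrix.dotProduct_mulVec, ← Matrix.mulVec_transpose]
  have e1 : x ⬝ᵥ ((C * Cᵀ) *ᵥ x) = y ⬝ᵥ y := by
    rw [← Matrix.mulVec_mulVec, ← hy, hxz]
  have hgoal : star x ⬝ᵥ (((l • (1 : Matrix N N ℝ)) - C * Cᵀ) *ᵥ x)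
      = l * (x ⬝ᵥ x) - y ⬝ᵥ y := by
    have hsx : star x = x := by simp
    rw [hsx, Matrix.sub_mulVec, dotProduct_sub, Matrix.smul_mulVec, Matrix.one_mulVec,
      dotProduct_smul, e1, smul_eq_mul]
  rw [hgoal]
  by_cases hy0 : y = 0
  · rw [hy0]
    simp only [dotProduct_zero, zero_dotProduct, sub_zero]
    positivity
  · have ht : 0 < y ⬝ᵥ y := by
      simpa using dotProduct_star_self_pos_iff.mpr hy0
    set z := C *ᵥ y with hz
    have hq := h.dotProduct_mulVec_pos hy0
    have e2 : y ⬝ᵥ ((Cᵀ * C) *ᵥ y) = z ⬝ᵥ z := by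
      rw [← Matrix.mulVec_mulVec, Matrix.dotProduct_mulVec, Matrix.vecMul_transpose, ← hz]
    have hqe : star y ⬝ᵥ (((l • (1 : Matrix K K ℝ)) - Cᵀ * C) *ᵥ y)
        = l * (y ⬝ᵥ y) - z ⬝ᵥ z := by
      have hsy : star y = y := by simp
      rw [hsy, Matrix.sub_mulVec, dotProduct_sub, Matrix.smul_mulVec, Matrix.one_mulVec,
        dotProduct_smul, e2, smul_eq_mul]
    rw [hqe] at hq
    have hcs : (x ⬝ᵥ z) ^ 2 ≤ (x ⬝ᵥ x) * (z ⬝ᵥ z) := by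
      simpa [dotProduct, sq] using Finset.sum_mul_sq_le_sq_mul_sq Finset.univ x z
    rw [hxz] at hcs
    nlinarith [mul_pos ha hq, hcs, ht, ha]

/-- One step of the Riccati recursion preserves symmetry and positive
semidefiniteness: `P₋ = Q + Aᵀ(I + PBR⁻¹Bᵀ − (1/λ)PΞΞᵀ)⁻¹PA` is well defined
(the inverse exists), symmetric, and positive semidefinite. -/
theorem stmt_6 {n m k : ℕ} (hn : 0 < n) (hm : 0 < m) (hk : 0 < k)
    (Q : Matrix (Fin n) (Fin n) ℝ) (hQ : Q.PosSemidef)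
    (P : Matrix (Fin n) (Fin n) ℝ) (hP : P.PosSemidef)
    (R : Matrix (Fin m) (Fin m) ℝ) (hR : R.PosDef)
    (A : Matrix (Fin n) (Fin n) ℝ) (B : Matrix (Fin n) (Fin m) ℝ)
    (Ξ : Matrix (Fin n) (Fin k) ℝ)
    (l : ℝ) (hlmax : ∀ μ ∈ spectrum ℝ (Ξᵀ * P * Ξ), μ < l) :
    IsUnit ((1 : Matrix (Fin n) (Fin n) ℝ) + P * B * R⁻¹ * Bᵀ - (1 / l) • (P * Ξ * Ξᵀ)) ∧
    (Q + Aᵀ *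
      ((1 : Matrix (Fin n) (Fin n) ℝ) + P * B * R⁻¹ * Bᵀ - (1 / l) • (P * Ξ * Ξᵀ))⁻¹
        * P * A).PosSemidef := by
  classical
  have hT : (Ξᵀ * P * Ξ).PosSemidef := by
    simpa [Matrix.conjTranspose_eq_transpose_of_trivial] using
      hP.conjTranspose_mul_mul_same Ξ
  have hl : 0 < l := by
    have i : Fin k := ⟨0, hk⟩
    have h1 := hT.eigenvalues_nonneg i
    have h2 := hlmax _ (hT.1.eigenvalues_mem_spectrum_real i)
    linarith
  set S := (open scoped MatrixOrder in CFC.sqrt P) with hSdef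
  have hS : S.PosSemidef := open scoped MatrixOrder in (CFC.sqrt_nonneg P).posSemidef
  have hSS : S * S = P := open scoped MatrixOrder in CFC.sqrt_mul_sqrt_self P hP.nonneg
  have hSH : Sᵀ = S := by
    have := hS.1
    rwa [Matrix.IsHermitian, Matrix.conjTranspose_eq_transpose_of_trivial] at this
  set C := S * Ξ with hC
  have hCt : Cᵀ = Ξᵀ * S := by rw [hC, Matrix.transpose_mul, hSH]
  have hCC : Cᵀ * C = Ξᵀ * P * Ξ := by
    rw [hCt, hC, ← hSS]
    simp only [Matrix.mul_assoc]
  have hflipIn : ((l • (1 : Matrix (Fin k) (Fin k) ℝ)) - Cᵀ * C).PosDef := by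
    rw [hCC]; exact aux_shift hT.1 hlmax
  have hflip := aux_flip hl hflipIn
  set K := B * R⁻¹ * Bᵀ - (1 / l) • (Ξ * Ξᵀ) with hK
  set N := (1 : Matrix (Fin n) (Fin n) ℝ) + S * (B * R⁻¹ * Bᵀ) * S - (1 / l) • (C * Cᵀ)
    with hN
  have hCCS : C * Cᵀ = S * (Ξ * Ξᵀ) * S := by
    rw [hC, hCt]; simp only [Matrix.mul_assoc]
  have hNpos : N.PosDef := by
    have e : (1 / l) • ((l • (1 : Matrix (Fin n) (Fin n) ℝ)) - C * Cᵀ)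
        = 1 - (1 / l) • (C * Cᵀ) := by
      rw [smul_sub, smul_smul, one_div, inv_mul_cancel₀ hl.ne', one_smul]
    have h1 : ((1 : Matrix (Fin n) (Fin n) ℝ) - (1 / l) • (C * Cᵀ)).PosDef := by
      rw [← e]; exact aux_smul_posDef hflip (by positivity)
    have hBRB : (B * R⁻¹ * Bᵀ).PosSemidef := by
      simpa [Matrix.conjTranspose_eq_transpose_of_trivial] using
        hR.inv.posSemidef.mul_mul_conjTranspose_same B
    have h2 : (S * (B * R⁻¹ * Bᵀ) * S).PosSemidef := by
      have := hBRB.mul_mul_conjTranspose_same S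
      rwa [Matrix.conjTranspose_eq_transpose_of_trivial, hSH] at this
    have hre : N = ((1 : Matrix (Fin n) (Fin n) ℝ) - (1 / l) • (C * Cᵀ))
        + S * (B * R⁻¹ * Bᵀ) * S := by
      rw [hN]; abel
    rw [hre]
    exact h1.add_posSemidef h2
  have hSKS : S * K * S = S * (B * R⁻¹ * Bᵀ) * S - (1 / l) • (C * Cᵀ) := by
    rw [hK, Matrix.mul_sub, Matrix.sub_mul, Matrix.mul_smul, Matrix.smul_mul, hCCS]
  have hNK : N = 1 + S * K * S := by
    rw [hN, hSKS, add_sub_assoc]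
  have hMK : (1 : Matrix (Fin n) (Fin n) ℝ) + P * B * R⁻¹ * Bᵀ - (1 / l) • (P * Ξ * Ξᵀ)
      = 1 + P * K := by
    rw [add_sub_assoc, hK, Matrix.mul_sub, Matrix.mul_smul]
    simp only [Matrix.mul_assoc]
  set Mx := (1 : Matrix (Fin n) (Fin n) ℝ) + P * B * R⁻¹ * Bᵀ - (1 / l) • (P * Ξ * Ξᵀ)
    with hMx
  have hNunit : IsUnit N.det := hNpos.det_pos.ne'.isUnit
  have hdet : Mx.det = N.det := by
    rw [hMK, hNK, ← hSS, Matrix.mul_assoc, Matrix.det_one_add_mul_comm, Matrix.mul_assoc]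
  have hMdet : IsUnit Mx.det := by rw [hdet]; exact hNunit
  have hMunit : IsUnit Mx := (Matrix.isUnit_iff_isUnit_det _).2 hMdet
  refine ⟨hMunit, ?_⟩
  have hMN : Mx * S = S * N := by
    rw [hMK, hNK, Matrix.add_mul, Matrix.mul_add, Matrix.one_mul, Matrix.mul_one, ← hSS]
    simp only [Matrix.mul_assoc]
  have hinv : Mx⁻¹ * S = S * N⁻¹ :=
    calc Mx⁻¹ * S = Mx⁻¹ * S * (N * N⁻¹) := by
          rw [Matrix.mul_nonsing_inv _ hNunit, Matrix.mul_one]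
      _ = Mx⁻¹ * (Mx * S) * N⁻¹ := by rw [hMN]; simp only [Matrix.mul_assoc]
      _ = (Mx⁻¹ * Mx) * (S * N⁻¹) := by simp only [Matrix.mul_assoc]
      _ = S * N⁻¹ := by rw [Matrix.nonsing_inv_mul _ hMdet, Matrix.one_mul]
  have hfinal : Mx⁻¹ * P = S * N⁻¹ * S := by
    rw [← hSS, ← Matrix.mul_assoc, hinv]
  have hNinv : (N⁻¹).PosSemidef := hNpos.inv.posSemidef
  have hconj : ((S * A)ᴴ * N⁻¹ * (S * A)).PosSemidef :=
    hNinv.conjTranspose_mul_mul_same (S * A)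
  have heq : Aᵀ * Mx⁻¹ * P * A = (S * A)ᴴ * N⁻¹ * (S * A) := by
    rw [Matrix.conjTranspose_eq_transpose_of_trivial, Matrix.transpose_mul, hSH,
      Matrix.mul_assoc Aᵀ Mx⁻¹ P, hfinal]
    simp only [Matrix.mul_assoc]
  rw [heq]
  exact hQ.add hconj
end

section
/- Let A, Q, W, P ∈ ℝ^{n×n} with Q and W symmetric and I + W P invertible. Then P satisfies the algebraic Riccati equation P = Q + Aᵀ P ( I + W P )⁻¹ A if and only if F · [[I], [P]] = G · [[I], [P]] · ( ( I + W P )⁻¹ A ), where F := [[A, 0], [−Q, I]], G := [[I, W], [0, Aᵀ]], and [[I],[P]] denotes the 2n×n matrix obtained by stacking I on top of P. In particular, every solution P of the algebraic Riccati equation can be written as P = V̂₂ V̂₁⁻¹ where the columns of the 2n×n matrix [V̂₁; V̂₂] solve the generalized eigenvalue problem F v = γ G v (i.e., F [V̂₁; V̂₂] = G [V̂₁; V̂₂] M for some matrix M). -/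
open Matrix

/-- `P` solves the ARE `P = Q + AᵀP(I + WP)⁻¹A` iff
`F [[I],[P]] = G [[I],[P]] ((I + WP)⁻¹ A)`; in particular every ARE solution has the
form `P = V̂₂ V̂₁⁻¹` where the columns of `[V̂₁; V̂₂]` solve the generalized eigenvalue
problem `F v = γ G v` (in matrix form `F V = G V M`). -/
theorem stmt_9 {n : ℕ} (hn : 0 < n)
    (A Q W P : Matrix (Fin n) (Fin n) ℝ)
    (hQ : Q.IsSymm) (hW : W.IsSymm)
    (hinv : IsUnit ((1 : Matrix (Fin n) (Fin n) ℝ) + W * P))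
    (F G : Matrix (Fin n ⊕ Fin n) (Fin n ⊕ Fin n) ℝ)
    (hF : F = fromBlocks A 0 (-Q) 1)
    (hG : G = fromBlocks 1 W 0 Aᵀ) :
    ((P = Q + Aᵀ * P * ((1 : Matrix (Fin n) (Fin n) ℝ) + W * P)⁻¹ * A) ↔
      F * fromRows (1 : Matrix (Fin n) (Fin n) ℝ) P =
        G * fromRows (1 : Matrix (Fin n) (Fin n) ℝ) P * (((1 : Matrix (Fin n) (Fin n) ℝ) + W * P)⁻¹ * A)) ∧
    ((P = Q + Aᵀ * P * ((1 : Matrix (Fin n) (Fin n) ℝ) + W * P)⁻¹ * A) →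
      ∃ V₁ V₂ M : Matrix (Fin n) (Fin n) ℝ, IsUnit V₁ ∧
        F * fromRows V₁ V₂ = G * fromRows V₁ V₂ * M ∧ P = V₂ * V₁⁻¹) := by
  have hcancel : ((1 : Matrix (Fin n) (Fin n) ℝ) + W * P) *
      (((1 : Matrix (Fin n) (Fin n) ℝ) + W * P)⁻¹ * A) = A := by
    rw [← Matrix.mul_assoc, Matrix.mul_nonsing_inv _ ((Matrix.isUnit_iff_isUnit_det _).mp hinv),
      Matrix.one_mul]
  have key : (P = Q + Aᵀ * P * ((1 : Matrix (Fin n) (Fin n) ℝ) + W * P)⁻¹ * A) ↔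
      F * fromRows (1 : Matrix (Fin n) (Fin n) ℝ) P =
        G * fromRows (1 : Matrix (Fin n) (Fin n) ℝ) P *
          (((1 : Matrix (Fin n) (Fin n) ℝ) + W * P)⁻¹ * A) := by
    subst hF hG
    rw [fromBlocks_mul_fromRows, fromBlocks_mul_fromRows, fromRows_mul, fromRows_ext_iff]
    simp only [Matrix.mul_one, Matrix.one_mul, Matrix.zero_mul, Matrix.mul_zero, add_zero,
      zero_add, hcancel, Matrix.mul_assoc]
    constructor
    · intro h
      refine ⟨trivial, ?_⟩
      conv_lhs => rw [h]
      rw [neg_add_cancel_left]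
    · rintro ⟨-, h⟩
      rw [← h, add_neg_cancel_left]
  refine ⟨key, fun h => ⟨1, P, ((1 : Matrix (Fin n) (Fin n) ℝ) + W * P)⁻¹ * A,
    isUnit_one, key.mp h, by simp⟩⟩
end

section
/- Let A, Q, W ∈ ℝ^{n×n} with Q and W symmetric, and set F := [[A, 0], [−Q, I]], G := [[I, W], [0, Aᵀ]], Ω := [[0, I], [−I, 0]] ∈ ℝ^{2n×2n}. Then F Ω Fᵀ = G Ω Gᵀ = [[0, A], [−Aᵀ, 0]]. Consequently, for every nonzero γ ∈ ℂ, det(F − γ G) = 0 if and only if det(F − γ⁻¹ G) = 0 (real matrices being regarded as complex matrices entrywise): the generalized eigenvalues of the pencil (F, G) occur in reciprocal pairs. -/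
open Matrix

private lemma fb_ext {l m o p : Type*} {R : Type*}
    {A A' : Matrix l m R} {B B' : Matrix l p R} {C C' : Matrix o m R} {D D' : Matrix o p R}
    (h1 : A = A') (h2 : B = B') (h3 : C = C') (h4 : D = D') :
    fromBlocks A B C D = fromBlocks A' B' C' D' := by
  rw [h1, h2, h3, h4]

private lemma key_det {n : ℕ} (γ : ℂ) (hγ : γ ≠ 0)
    (A Q W : Matrix (Fin n) (Fin n) ℂ) (hQ : Qᵀ = Q) (hW : Wᵀ = W) :
    (fromBlocks A 0 (-Q) 1 - γ • fromBlocks 1 W 0 Aᵀ).det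
      = γ ^ (n + n) * (fromBlocks A 0 (-Q) 1 - γ⁻¹ • fromBlocks 1 W 0 Aᵀ).det := by
  set F : Matrix (Fin n ⊕ Fin n) (Fin n ⊕ Fin n) ℂ := fromBlocks A 0 (-Q) 1 with hF
  set G : Matrix (Fin n ⊕ Fin n) (Fin n ⊕ Fin n) ℂ := fromBlocks 1 W 0 Aᵀ with hG
  set Ω : Matrix (Fin n ⊕ Fin n) (Fin n ⊕ Fin n) ℂ := fromBlocks 0 1 (-1) 0 with hΩ
  set Ω' : Matrix (Fin n ⊕ Fin n) (Fin n ⊕ Fin n) ℂ := fromBlocks 0 (-1) 1 0 with hΩ'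
  set D₁ : Matrix (Fin n ⊕ Fin n) (Fin n ⊕ Fin n) ℂ := fromBlocks 1 0 0 (γ • 1) with hD₁
  set D₂ : Matrix (Fin n ⊕ Fin n) (Fin n ⊕ Fin n) ℂ := fromBlocks 1 0 0 (γ⁻¹ • 1) with hD₂
  have hΩΩ' : Ω * Ω' = 1 := by
    rw [hΩ, hΩ', fromBlocks_multiply, ← fromBlocks_one]
    congr 1 <;> simp
  have hkey : D₁ * (F - γ • G) * D₂ = (-γ) • (Ω * (F - γ⁻¹ • G)ᵀ * Ω') := by
    rw [hF, hG, hΩ, hΩ', hD₁, hD₂]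
    simp only [sub_eq_add_neg, fromBlocks_smul, fromBlocks_transpose, transpose_one,
      transpose_zero, transpose_neg, transpose_smul, transpose_add, transpose_transpose, ← mul_assoc, hQ, hW, fromBlocks_neg, fromBlocks_add,
      fromBlocks_multiply, Matrix.mul_one, Matrix.one_mul, Matrix.mul_zero, Matrix.zero_mul,
      Matrix.mul_neg, Matrix.neg_mul, Matrix.smul_mul, Matrix.mul_smul, smul_smul,
      neg_mul, mul_inv_cancel₀ hγ, inv_mul_cancel₀ hγ, neg_smul, one_smul,
      add_zero, zero_add, neg_neg, neg_add, smul_add, smul_neg, smul_zero]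
    refine fb_ext ?_ ?_ ?_ ?_ <;> module
  have hdet := congrArg Matrix.det hkey
  rw [Matrix.det_mul, Matrix.det_mul, Matrix.det_smul, Matrix.det_mul, Matrix.det_mul,
    Matrix.det_transpose] at hdet
  have hcard : Fintype.card (Fin n ⊕ Fin n) = n + n := by
    simp [Fintype.card_sum]
  have hd1 : D₁.det = γ ^ n := by
    rw [hD₁, det_fromBlocks_zero₂₁, Matrix.det_one, Matrix.det_smul, Matrix.det_one]
    simp
  have hd2 : D₂.det = (γ⁻¹) ^ n := by
    rw [hD₂, det_fromBlocks_zero₂₁, Matrix.det_one, Matrix.det_smul, Matrix.det_one]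
    simp
  have hΩdet : Ω.det * Ω'.det = 1 := by
    rw [← Matrix.det_mul, hΩΩ', Matrix.det_one]
  have hneg : (-γ) ^ Fintype.card (Fin n ⊕ Fin n) = γ ^ (n + n) := by
    rw [hcard, Even.neg_pow ⟨n, rfl⟩]
  have h1 : γ ^ n * (γ⁻¹) ^ n = 1 := by
    rw [← mul_pow, mul_inv_cancel₀ hγ, one_pow]
  rw [hd1, hd2, hneg] at hdet
  linear_combination hdet - (F - γ • G).det * h1
    + γ ^ (n + n) * (F - γ⁻¹ • G).det * hΩdet - γ ^ (n + n) * (F - γ⁻¹ • G).det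

/-- Symplectic property of the pencil `(F, G)`:
`F Ω Fᵀ = G Ω Gᵀ = [[0, A], [−Aᵀ, 0]]`, and consequently the generalized eigenvalues
occur in reciprocal pairs: for nonzero `γ ∈ ℂ`, `det(F − γG) = 0 ↔ det(F − γ⁻¹G) = 0`. -/
theorem stmt_10 {n : ℕ} (hn : 0 < n)
    (A Q W : Matrix (Fin n) (Fin n) ℝ) (hQ : Q.IsSymm) (hW : W.IsSymm)
    (F G Ω : Matrix (Fin n ⊕ Fin n) (Fin n ⊕ Fin n) ℝ)
    (hF : F = fromBlocks A 0 (-Q) 1)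
    (hG : G = fromBlocks 1 W 0 Aᵀ)
    (hΩ : Ω = fromBlocks 0 1 (-1) 0) :
    (F * Ω * Fᵀ = fromBlocks 0 A (-Aᵀ) 0 ∧ G * Ω * Gᵀ = fromBlocks 0 A (-Aᵀ) 0) ∧
    (∀ γ : ℂ, γ ≠ 0 →
      ((F.map (fun r : ℝ => (r : ℂ)) - γ • G.map (fun r : ℝ => (r : ℂ))).det = 0 ↔
        (F.map (fun r : ℝ => (r : ℂ)) - γ⁻¹ • G.map (fun r : ℝ => (r : ℂ))).det = 0)) := by
  subst hF hG hΩ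
  constructor
  · constructor
    · rw [fromBlocks_transpose, fromBlocks_multiply, fromBlocks_multiply]
      congr 1 <;> simp [hQ.eq]
    · rw [fromBlocks_transpose, fromBlocks_multiply, fromBlocks_multiply]
      congr 1 <;> simp [hW.eq]
  · intro γ hγ
    have eF : (fromBlocks A 0 (-Q) (1 : Matrix (Fin n) (Fin n) ℝ)).map (fun r : ℝ => (r : ℂ))
        = fromBlocks (A.map (fun r : ℝ => (r : ℂ))) 0 (-(Q.map (fun r : ℝ => (r : ℂ)))) 1 := by
      rw [fromBlocks_map]
      refine fb_ext ?_ ?_ ?_ ?_ <;>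
        · ext i j; simp [Matrix.map_apply, Matrix.one_apply, apply_ite]
    have eG : (fromBlocks 1 W 0 Aᵀ : Matrix (Fin n ⊕ Fin n) (Fin n ⊕ Fin n) ℝ).map
          (fun r : ℝ => (r : ℂ))
        = fromBlocks 1 (W.map (fun r : ℝ => (r : ℂ))) 0 (A.map (fun r : ℝ => (r : ℂ)))ᵀ := by
      rw [fromBlocks_map]
      refine fb_ext ?_ ?_ ?_ ?_ <;>
        · ext i j; simp [Matrix.map_apply, Matrix.one_apply, apply_ite]
    rw [eF, eG]
    have hQ' : (Q.map (fun r : ℝ => (r : ℂ)))ᵀ = Q.map (fun r : ℝ => (r : ℂ)) := by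
      ext i j; simp [Matrix.map_apply]; exact_mod_cast congrFun (congrFun hQ.eq i) j
    have hW' : (W.map (fun r : ℝ => (r : ℂ)))ᵀ = W.map (fun r : ℝ => (r : ℂ)) := by
      ext i j; simp [Matrix.map_apply]; exact_mod_cast congrFun (congrFun hW.eq i) j
    have h := key_det γ hγ (A.map (fun r : ℝ => (r : ℂ))) (Q.map (fun r : ℝ => (r : ℂ)))
      (W.map (fun r : ℝ => (r : ℂ))) hQ' hW'
    constructor
    · intro h0
      have := h0 ▸ h
      rcases mul_eq_zero.mp this.symm with h' | h'
      · exact absurd h' (pow_ne_zero _ hγ)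
      · exact h'
    · intro h0
      rw [h, h0, mul_zero]
end

section
/- Let A, Q, W ∈ ℝ^{n×n} with Q and W symmetric positive semidefinite. Assume (A, √Q) is observable in the PBH sense: there exist no γ ∈ ℂ and nonzero v ∈ ℂⁿ such that A v = γ v and Q v = 0; and (A, √W) is stabilizable in the PBH sense: there exist no γ ∈ ℂ with |γ| ≥ 1 and nonzero v ∈ ℂⁿ such that Aᵀ v = γ v and W v = 0. Then the pencil (F, G), with F := [[A, 0], [−Q, I]] and G := [[I, W], [0, Aᵀ]], has no generalized eigenvalue on the unit circle: for every γ ∈ ℂ with |γ| = 1, det(F − γ G) ≠ 0. -/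
open Matrix ComplexOrder

private lemma map_posSemidef {n : ℕ} {M : Matrix (Fin n) (Fin n) ℝ} (h : M.PosSemidef) :
    (M.map (fun r : ℝ => (r : ℂ))).PosSemidef := by
  obtain ⟨B, hB⟩ : ∃ B : Matrix (Fin n) (Fin n) ℝ, M = Bᵀ * B := by
    open scoped MatrixOrder Matrix.Norms.L2Operator in
    obtain ⟨B, hB⟩ := CStarAlgebra.nonneg_iff_eq_star_mul_self.mp h.nonneg
    exact ⟨B, by rw [hB, Matrix.star_eq_conjTranspose, Matrix.conjTranspose_eq_transpose_of_trivial]⟩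
  have hEq : M.map (fun r : ℝ => (r : ℂ)) =
      (B.map (fun r : ℝ => (r : ℂ)))ᴴ * (B.map (fun r : ℝ => (r : ℂ))) := by
    subst hB
    ext i j
    simp [Matrix.mul_apply, Matrix.conjTranspose_apply, Matrix.map_apply]
  rw [hEq]
  exact Matrix.posSemidef_conjTranspose_mul_self _

private lemma star_mulVec_map {n : ℕ} (M : Matrix (Fin n) (Fin n) ℝ) (u : Fin n → ℂ) :
    star ((M.map (fun r : ℝ => (r : ℂ))) *ᵥ u)
      = (M.map (fun r : ℝ => (r : ℂ))) *ᵥ (star u) := by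
  ext i
  simp only [Pi.star_apply, Matrix.mulVec, dotProduct, Matrix.map_apply, star_sum]
  refine Finset.sum_congr rfl fun j _ => ?_
  simp [star_mul', Complex.conj_ofReal]

/-- Under PBH observability of `(A, √Q)` and PBH stabilizability of
`(A, √W)`, the pencil `(F, G)` has no generalized eigenvalue on the unit circle:
`det(F − γG) ≠ 0` for all `γ ∈ ℂ` with `|γ| = 1`. -/
theorem stmt_11 {n : ℕ} (hn : 0 < n)
    (A Q W : Matrix (Fin n) (Fin n) ℝ) (hQ : Q.PosSemidef) (hW : W.PosSemidef)
    (hobs : ¬ ∃ (γ : ℂ) (v : Fin n → ℂ), v ≠ 0 ∧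
      (A.map (fun r : ℝ => (r : ℂ))) *ᵥ v = γ • v ∧
      (Q.map (fun r : ℝ => (r : ℂ))) *ᵥ v = 0)
    (hstab : ¬ ∃ (γ : ℂ) (v : Fin n → ℂ), 1 ≤ ‖γ‖ ∧ v ≠ 0 ∧
      (Aᵀ.map (fun r : ℝ => (r : ℂ))) *ᵥ v = γ • v ∧
      (W.map (fun r : ℝ => (r : ℂ))) *ᵥ v = 0)
    (F G : Matrix (Fin n ⊕ Fin n) (Fin n ⊕ Fin n) ℝ)
    (hF : F = fromBlocks A 0 (-Q) 1)
    (hG : G = fromBlocks 1 W 0 Aᵀ) :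
    ∀ γ : ℂ, ‖γ‖ = 1 →
      (F.map (fun r : ℝ => (r : ℂ)) - γ • G.map (fun r : ℝ => (r : ℂ))).det ≠ 0 := by
  intro γ hγ hdet
  set c : ℝ → ℂ := fun r : ℝ => (r : ℂ) with hc
  have hγne : γ ≠ 0 := by
    intro h; rw [h] at hγ; simp at hγ
  have hγ1 : γ * star γ = 1 := by
    rw [Complex.star_def, Complex.mul_conj, Complex.normSq_eq_norm_sq, hγ]; norm_num
  obtain ⟨v, hv0, hv⟩ := Matrix.exists_mulVec_eq_zero_iff.mpr hdet
  -- block structure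
  have hM : F.map c - γ • G.map c =
      fromBlocks (A.map c - γ • 1) (-(γ • W.map c)) (-(Q.map c)) (1 - γ • (Aᵀ.map c)) := by
    subst hF hG
    rw [fromBlocks_map, fromBlocks_map, fromBlocks_smul]
    ext (i | i) (j | j) <;> (try by_cases h : i = j) <;>
      simp [Matrix.one_apply, Matrix.map_apply, Matrix.sub_apply, Matrix.smul_apply, h, hc]
  rw [hM, fromBlocks_mulVec] at hv
  set x : Fin n → ℂ := v ∘ Sum.inl with hx
  set y : Fin n → ℂ := v ∘ Sum.inr with hy
  have h1 : (A.map c - γ • 1) *ᵥ x + (-(γ • W.map c)) *ᵥ y = 0 :=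
    funext fun i => congrFun hv (Sum.inl i)
  have h2 : (-(Q.map c)) *ᵥ x + (1 - γ • (Aᵀ.map c)) *ᵥ y = 0 :=
    funext fun i => congrFun hv (Sum.inr i)
  rw [sub_mulVec, smul_mulVec, one_mulVec, neg_mulVec, smul_mulVec] at h1
  rw [neg_mulVec, sub_mulVec, one_mulVec, smul_mulVec] at h2
  have hAx : A.map c *ᵥ x = γ • x + γ • (W.map c *ᵥ y) := by
    have h1' : A.map c *ᵥ x - (γ • x + γ • (W.map c *ᵥ y)) = 0 := by
      calc A.map c *ᵥ x - (γ • x + γ • (W.map c *ᵥ y))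
          = A.map c *ᵥ x - γ • x + -(γ • (W.map c *ᵥ y)) := by abel
        _ = 0 := h1
    exact sub_eq_zero.mp h1'
  have hQy : y = Q.map c *ᵥ x + γ • (Aᵀ.map c *ᵥ y) := by
    have h2' : y - (Q.map c *ᵥ x + γ • (Aᵀ.map c *ᵥ y)) = 0 := by
      calc y - (Q.map c *ᵥ x + γ • (Aᵀ.map c *ᵥ y))
          = -(Q.map c *ᵥ x) + (y - γ • (Aᵀ.map c *ᵥ y)) := by abel
        _ = 0 := h2
    exact sub_eq_zero.mp h2'
  -- conjugated second equation
  have hAty : Aᵀ.map c *ᵥ (star y) = γ • (star y - Q.map c *ᵥ (star x)) := by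
    have hs := congrArg star hQy
    rw [star_add, star_smul, star_mulVec_map, star_mulVec_map] at hs
    have h3 : γ • star y = γ • (Q.map c *ᵥ star x) + Aᵀ.map c *ᵥ star y := by
      calc γ • star y
          = γ • ((Q.map c) *ᵥ star x + star γ • ((Aᵀ.map c) *ᵥ star y)) := congrArg (γ • ·) hs
        _ = γ • (Q.map c *ᵥ star x) + (γ * star γ) • (Aᵀ.map c *ᵥ star y) := by
            rw [smul_add, smul_smul]
        _ = γ • (Q.map c *ᵥ star x) + Aᵀ.map c *ᵥ star y := by rw [hγ1, one_smul]
    rw [smul_sub, eq_sub_iff_add_eq, add_comm]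
    exact h3.symm
  have hQsym : Qᵀ = Q := by
    ext i j
    have := congrFun (congrFun hQ.1 i) j
    simpa [Matrix.conjTranspose_apply] using this
  -- scalar identity
  set q : ℂ := star x ⬝ᵥ (Q.map c *ᵥ x) with hq
  set w : ℂ := star y ⬝ᵥ (W.map c *ᵥ y) with hw
  have hQdot : (Q.map c *ᵥ star x) ⬝ᵥ x = q := by
    calc (Q.map c *ᵥ star x) ⬝ᵥ x = x ⬝ᵥ (Q.map c *ᵥ star x) := dotProduct_comm _ _
      _ = (x ᵥ* Q.map c) ⬝ᵥ star x := dotProduct_mulVec _ _ _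
      _ = ((Q.map c)ᵀ *ᵥ x) ⬝ᵥ star x := by rw [mulVec_transpose]
      _ = (Q.map c *ᵥ x) ⬝ᵥ star x := by rw [← Matrix.transpose_map, hQsym]
      _ = q := dotProduct_comm _ _
  have key : γ * ((star y ⬝ᵥ x) + w) = γ * ((star y ⬝ᵥ x) - q) := by
    have lhs : star y ⬝ᵥ (A.map c *ᵥ x) = γ * ((star y ⬝ᵥ x) + w) := by
      rw [hAx, dotProduct_add, dotProduct_smul, dotProduct_smul]
      simp [hw, mul_add, smul_eq_mul]
    have rhs : star y ⬝ᵥ (A.map c *ᵥ x) = γ * ((star y ⬝ᵥ x) - q) := by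
      rw [dotProduct_mulVec, ← mulVec_transpose, ← Matrix.transpose_map, hAty,
        smul_dotProduct, sub_dotProduct, hQdot]
      simp [smul_eq_mul]
    rw [← lhs, rhs]
  have hsum : w + q = 0 := by
    have := mul_left_cancel₀ hγne key
    have h' : w = -q := by linear_combination this
    rw [h']; ring
  have hqnn : 0 ≤ q := (map_posSemidef hQ).dotProduct_mulVec_nonneg x
  have hwnn : 0 ≤ w := (map_posSemidef hW).dotProduct_mulVec_nonneg y
  have hw0 : w = 0 := le_antisymm (by
    have : w ≤ w + q := le_add_of_nonneg_right hqnn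
    rw [hsum] at this; exact this) hwnn
  have hq0 : q = 0 := by rw [hw0, zero_add] at hsum; exact hsum
  have hQx : Q.map c *ᵥ x = 0 := ((map_posSemidef hQ).dotProduct_mulVec_zero_iff x).mp hq0
  have hWy : W.map c *ᵥ y = 0 := ((map_posSemidef hW).dotProduct_mulVec_zero_iff y).mp hw0
  by_cases hx0 : x = 0
  · -- then y is a bad vector for stabilizability
    have hy0 : y ≠ 0 := by
      intro h
      apply hv0
      funext i
      cases i with
      | inl j => exact congrFun hx0 j
      | inr j => exact congrFun h j
    have hAy : y = γ • (Aᵀ.map c *ᵥ y) := by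
      nth_rewrite 1 [hQy]
      rw [hx0, mulVec_zero, zero_add]
    have hAy' : Aᵀ.map c *ᵥ y = star γ • y := by
      have h4 := congrArg (fun u => star γ • u) hAy
      simp only [smul_smul] at h4
      rw [mul_comm, hγ1, one_smul] at h4
      exact h4.symm
    exact hstab ⟨star γ, y, by rw [Complex.star_def, Complex.norm_conj, hγ], hy0, hAy', hWy⟩
  · -- x is a bad vector for observability
    have hAx' : A.map c *ᵥ x = γ • x := by rw [hAx, hWy, smul_zero, add_zero]
    exact hobs ⟨γ, x, hx0, hAx', hQx⟩
end

section
/- Let A, Q, W ∈ ℝ^{n×n} with Q and W symmetric positive semidefinite, and set F := [[A, 0], [−Q, I]], G := [[I, W], [0, Aᵀ]]. Suppose V₁, V₂, M ∈ ℂ^{n×n} with V₁ invertible, all eigenvalues of M of modulus strictly less than 1, and F [V₁; V₂] = G [V₁; V₂] M (where [V₁; V₂] ∈ ℂ^{2n×n} is the stacked matrix). Then P := V₂ V₁⁻¹ is Hermitian positive semidefinite, I + W P is invertible, and P solves the algebraic Riccati equation P = Q + Aᵀ P ( I + W P )⁻¹ A. -/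
open Matrix ComplexOrder
open Filter


section norms
attribute [local instance] Matrix.linftyOpNormedRing Matrix.linftyOpNormedAlgebra

variable {n : ℕ}

private lemma entry_le_norm (A : Matrix (Fin n) (Fin n) ℂ) (i j : Fin n) : ‖A i j‖ ≤ ‖A‖ := by
  have h : ‖A i j‖₊ ≤ ‖A‖₊ := by
    rw [Matrix.linfty_opNNNorm_def]
    exact le_trans
      (Finset.single_le_sum (f := fun j => ‖A i j‖₊) (fun _ _ => zero_le) (Finset.mem_univ j))
      (Finset.le_sup (f := fun i => ∑ j, ‖A i j‖₊) (Finset.mem_univ i))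
  exact_mod_cast h

lemma entry_pow_tendsto (hn : 0 < n) (M : Matrix (Fin n) (Fin n) ℂ)
    (hM : ∀ γ ∈ spectrum ℂ M, ‖γ‖ < 1) (i j : Fin n) :
    Tendsto (fun k => (M ^ k) i j) atTop (nhds (0:ℂ)) := by
  haveI : Nonempty (Fin n) := Fin.pos_iff_nonempty.mp hn
  haveI : Nontrivial (Matrix (Fin n) (Fin n) ℂ) :=
    ⟨0, 1, fun h => by simpa using congrFun (congrFun h ⟨0, hn⟩) ⟨0, hn⟩⟩
  obtain ⟨z, hz, hzr⟩ := spectrum.exists_nnnorm_eq_spectralRadius M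
  have hρ : spectralRadius ℂ M < 1 := by
    rw [← hzr]
    have : ‖z‖₊ < 1 := by
      have := hM z hz
      exact_mod_cast this
    exact_mod_cast this
  obtain ⟨c, hc1, hc2⟩ := exists_between hρ
  have hctop : c ≠ ⊤ := (hc2.trans_le le_top).ne
  set r : NNReal := c.toNNReal with hr
  have hcr : c = (r : ENNReal) := (ENNReal.coe_toNNReal hctop).symm
  have hr1 : (r : ℝ) < 1 := by
    have : (r : ENNReal) < 1 := hcr ▸ hc2
    exact_mod_cast this
  have hev := (spectrum.pow_nnnorm_pow_one_div_tendsto_nhds_spectralRadius M).eventually_lt_const hc1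
  have hev2 : ∀ᶠ k : ℕ in atTop, ‖M ^ k‖ ≤ (r : ℝ) ^ k := by
    filter_upwards [hev, eventually_ge_atTop 1] with k hk hk1
    have hknz : (k : ℝ) ≠ 0 := Nat.cast_ne_zero.mpr (by omega)
    have h1 : (‖M ^ k‖₊ : ENNReal) = ((‖M ^ k‖₊ : ENNReal) ^ (1 / (k:ℝ))) ^ (k:ℝ) := by
      rw [← ENNReal.rpow_mul, one_div_mul_cancel hknz, ENNReal.rpow_one]
    have h2 : (‖M ^ k‖₊ : ENNReal) ≤ (r : ENNReal) ^ (k : ℝ) := by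
      rw [h1]
      exact ENNReal.rpow_le_rpow (hk.le.trans hcr.le) (by positivity)
    rw [ ← ENNReal.coe_rpow_of_nonneg _ (by positivity), ENNReal.coe_le_coe] at h2
    have h3 : ‖M ^ k‖₊ ≤ r ^ k := by
      rwa [← NNReal.rpow_natCast]
    exact_mod_cast h3
  have hnorm : Tendsto (fun k : ℕ => ‖M ^ k‖) atTop (nhds 0) :=
    squeeze_zero' (Eventually.of_forall fun _ => norm_nonneg _) hev2
      (tendsto_pow_atTop_nhds_zero_of_lt_one (by positivity) hr1)
  exact squeeze_zero_norm' (hev2.mono fun k hk => (entry_le_norm (M ^ k) i j).trans hk)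
    (tendsto_pow_atTop_nhds_zero_of_lt_one (by positivity) hr1)

end norms

section helpers

variable {n : ℕ}

private lemma conj_mul_entry_tendsto (hn : 0 < n) (S : Matrix (Fin n) (Fin n) ℂ)
    (hS : ∀ γ ∈ spectrum ℂ S, ‖γ‖ < 1) (P : Matrix (Fin n) (Fin n) ℂ) (i j : Fin n) :
    Tendsto (fun k => ((S ^ k)ᴴ * P * S ^ k : Matrix (Fin n) (Fin n) ℂ) i j) atTop (nhds (0:ℂ)) := by
  have hexp : ∀ k : ℕ, ((S ^ k)ᴴ * P * S ^ k : Matrix (Fin n) (Fin n) ℂ) i j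
      = ∑ q, (∑ p, star ((S ^ k) p i) * P p q) * (S ^ k) q j := by
    intro k
    simp only [Matrix.mul_apply, Matrix.conjTranspose_apply]
  refine Tendsto.congr (fun k => (hexp k).symm) ?_
  have h0 : ∀ p q : Fin n, Tendsto (fun k => star ((S ^ k) p i) * P p q) atTop (nhds (0:ℂ)) := by
    intro p q
    simpa using ((entry_pow_tendsto hn S hS p i).star.mul_const (P p q))
  simpa using tendsto_finset_sum Finset.univ fun q (_ : q ∈ Finset.univ) =>
    (tendsto_finset_sum Finset.univ fun p _ => h0 p q).mul (entry_pow_tendsto hn S hS q j)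

private lemma stein_zero (hn : 0 < n) (M X : Matrix (Fin n) (Fin n) ℂ)
    (hM : ∀ γ ∈ spectrum ℂ M, ‖γ‖ < 1)
    (h : X = Mᴴ * X * M) : X = 0 := by
  have hk : ∀ k : ℕ, X = (M ^ k)ᴴ * X * M ^ k := by
    intro k
    induction k with
    | zero => simp
    | succ k ih =>
      calc X = Mᴴ * X * M := h
      _ = Mᴴ * ((M ^ k)ᴴ * X * M ^ k) * M := by rw [← ih]
      _ = (M ^ (k+1))ᴴ * X * M ^ (k+1) := by
          rw [pow_succ, conjTranspose_mul]
          noncomm_ring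
  ext i j
  have hT : Tendsto (fun k : ℕ => X i j) atTop (nhds (0:ℂ)) :=
    (conj_mul_entry_tendsto hn M hM X i j).congr fun k => by rw [← hk k]
  simpa using (tendsto_nhds_unique hT tendsto_const_nhds).symm

private lemma quad_tendsto (hn : 0 < n) (S P : Matrix (Fin n) (Fin n) ℂ)
    (hS : ∀ γ ∈ spectrum ℂ S, ‖γ‖ < 1) (x : Fin n → ℂ) :
    Tendsto (fun k => star x ⬝ᵥ ((S ^ k)ᴴ * P * S ^ k) *ᵥ x) atTop (nhds (0:ℂ)) := by
  have hexp : ∀ k : ℕ, star x ⬝ᵥ ((S ^ k)ᴴ * P * S ^ k) *ᵥ x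
      = ∑ i, ∑ j, star (x i) * (((S ^ k)ᴴ * P * S ^ k) i j * x j) := by
    intro k
    simp [dotProduct, Matrix.mulVec, Finset.mul_sum]
  refine Tendsto.congr (fun k => (hexp k).symm) ?_
  simpa using tendsto_finset_sum Finset.univ fun i _ =>
    tendsto_finset_sum Finset.univ fun j _ =>
      (((conj_mul_entry_tendsto hn S hS P i j).mul_const (x j)).const_mul (star (x i)))

private lemma psd_of_stein (hn : 0 < n) (S P : Matrix (Fin n) (Fin n) ℂ)
    (hS : ∀ γ ∈ spectrum ℂ S, ‖γ‖ < 1) (hHerm : P.IsHermitian)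
    (hC : (P - Sᴴ * P * S).PosSemidef) : P.PosSemidef := by
  refine .of_dotProduct_mulVec_nonneg hHerm fun x => ?_
  set g : ℕ → ℂ := fun k => star x ⬝ᵥ ((S ^ k)ᴴ * P * S ^ k) *ᵥ x with hg
  have key : ∀ k : ℕ, g (k+1) ≤ g k := by
    intro k
    have hpsd : ((S ^ k)ᴴ * (P - Sᴴ * P * S) * S ^ k).PosSemidef :=
      hC.conjTranspose_mul_mul_same (S ^ k)
    have h0 := hpsd.dotProduct_mulVec_nonneg x
    have heq : (S ^ k)ᴴ * (P - Sᴴ * P * S) * S ^ k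
        = (S ^ k)ᴴ * P * S ^ k - (S ^ (k+1))ᴴ * P * S ^ (k+1) := by
      rw [pow_succ', conjTranspose_mul, Matrix.mul_sub, Matrix.sub_mul]
      noncomm_ring
    rw [heq, Matrix.sub_mulVec, dotProduct_sub, sub_nonneg] at h0
    exact h0
  have mono : ∀ k : ℕ, g k ≤ g 0 := by
    intro k
    induction k with
    | zero => exact le_refl _
    | succ k ih => exact (key k).trans ih
  have hg0 : g 0 = star x ⬝ᵥ P *ᵥ x := by simp [hg]
  have hT : Tendsto g atTop (nhds (0:ℂ)) := quad_tendsto hn S P hS x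
  have him : (star x ⬝ᵥ P *ᵥ x).im = 0 := by
    have h1 : Tendsto (fun k => (g k).im) atTop (nhds (0:ℝ)) := by
      simpa [Function.comp_def] using (Complex.continuous_im.tendsto 0).comp hT
    have h2 : ∀ k, (g k).im = (star x ⬝ᵥ P *ᵥ x).im := fun k => ((mono k).2).trans (by rw [hg0])
    exact (tendsto_nhds_unique (h1.congr fun k => h2 k) tendsto_const_nhds).symm
  have hre : 0 ≤ (star x ⬝ᵥ P *ᵥ x).re := by
    have h1 : Tendsto (fun k => (g k).re) atTop (nhds (0:ℝ)) := by
      simpa [Function.comp_def] using (Complex.continuous_re.tendsto 0).comp hT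
    refine le_of_tendsto' h1 fun k => ?_
    have := (mono k).1
    rwa [hg0] at this
  rw [Complex.le_def]
  exact ⟨by simpa using hre, by simpa using him.symm⟩

end helpers

section mainproof

variable {n : ℕ}

private lemma psd_map {B : Matrix (Fin n) (Fin n) ℝ} (hB : B.PosSemidef) :
    (B.map (fun r : ℝ => (r : ℂ))).PosSemidef := by
  obtain ⟨C, hC⟩ : ∃ C : Matrix (Fin n) (Fin n) ℝ, B = Cᵀ * C := by
    classical
    open scoped MatrixOrder in
    obtain ⟨X, hX, -, hXX⟩ :=
      CFC.exists_sqrt_of_isSelfAdjoint_of_quasispectrumRestricts hB.isHermitian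
        (QuasispectrumRestricts.nnreal_of_nonneg hB.nonneg)
    refine ⟨X, ?_⟩
    have hXt : Xᵀ = X := by
      have := hX.star_eq
      rwa [Matrix.star_eq_conjTranspose, Matrix.conjTranspose_eq_transpose_of_trivial] at this
    rw [hXt, hXX]
  have key : B.map (fun r : ℝ => (r : ℂ))
      = (C.map (fun r : ℝ => (r : ℂ)))ᴴ * (C.map fun r : ℝ => (r : ℂ)) := by
    rw [hC]
    ext i j
    simp [Matrix.mul_apply, Matrix.map_apply, Matrix.conjTranspose_apply, Complex.conj_ofReal]
  rw [key]
  exact Matrix.posSemidef_conjTranspose_mul_self _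

private lemma mapC_conjTranspose (B : Matrix (Fin n) (Fin n) ℝ) :
    (B.map (fun r : ℝ => (r : ℂ)))ᴴ = (B.map (fun r : ℝ => (r : ℂ)))ᵀ := by
  ext i j
  simp [Matrix.conjTranspose_apply, Matrix.map_apply, Complex.conj_ofReal]

end mainproof


/-- Sufficiency direction of the deflating-subspace characterization: if
`V₁` is invertible, `M` has all eigenvalues of modulus `< 1`, and
`F [V₁; V₂] = G [V₁; V₂] M`, then `P = V₂V₁⁻¹` is Hermitian PSD, `I + WP` is
invertible, and `P` solves the ARE `P = Q + AᵀP(I + WP)⁻¹A`. -/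
theorem stmt_13 {n : ℕ} (hn : 0 < n)
    (A Q W : Matrix (Fin n) (Fin n) ℝ) (hQ : Q.PosSemidef) (hW : W.PosSemidef)
    (F G : Matrix (Fin n ⊕ Fin n) (Fin n ⊕ Fin n) ℝ)
    (hF : F = fromBlocks A 0 (-Q) 1)
    (hG : G = fromBlocks 1 W 0 Aᵀ)
    (V₁ V₂ M : Matrix (Fin n) (Fin n) ℂ) (hV₁ : IsUnit V₁)
    (hM : ∀ γ ∈ spectrum ℂ M, ‖γ‖ < 1)
    (hFV : F.map (fun r : ℝ => (r : ℂ)) * fromRows V₁ V₂ =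
      G.map (fun r : ℝ => (r : ℂ)) * fromRows V₁ V₂ * M)
    (P : Matrix (Fin n) (Fin n) ℂ) (hP : P = V₂ * V₁⁻¹) :
    P.PosSemidef ∧
    IsUnit ((1 : Matrix (Fin n) (Fin n) ℂ) + W.map (fun r : ℝ => (r : ℂ)) * P) ∧
    P = Q.map (fun r : ℝ => (r : ℂ)) +
      (A.map (fun r : ℝ => (r : ℂ)))ᵀ * P *
        ((1 : Matrix (Fin n) (Fin n) ℂ) + W.map (fun r : ℝ => (r : ℂ)) * P)⁻¹ *
        A.map (fun r : ℝ => (r : ℂ)) := by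
    classical
  set A' : Matrix (Fin n) (Fin n) ℂ := A.map (fun r : ℝ => (r : ℂ)) with hA'def
  set Q' : Matrix (Fin n) (Fin n) ℂ := Q.map (fun r : ℝ => (r : ℂ)) with hQ'def
  set W' : Matrix (Fin n) (Fin n) ℂ := W.map (fun r : ℝ => (r : ℂ)) with hW'def
  have hdet : IsUnit V₁.det := (Matrix.isUnit_iff_isUnit_det V₁).mp hV₁
  have hV₁l : V₁⁻¹ * V₁ = 1 := Matrix.nonsing_inv_mul V₁ hdet
  have hV₁r : V₁ * V₁⁻¹ = 1 := Matrix.mul_nonsing_inv V₁ hdet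
  have hV₁inv : IsUnit V₁⁻¹ := Matrix.isUnit_nonsing_inv_iff.mpr hV₁
  -- block equations
  have hFmap : F.map (fun r : ℝ => (r : ℂ)) = fromBlocks A' 0 (-Q') 1 := by
    rw [hF, Matrix.fromBlocks_map]
    ext (i|i) (j|j) <;>
      simp [Matrix.fromBlocks, Matrix.map_apply, hA'def, hQ'def, Matrix.one_apply, apply_ite]
  have hGmap : G.map (fun r : ℝ => (r : ℂ)) = fromBlocks 1 W' 0 A'ᵀ := by
    rw [hG, Matrix.fromBlocks_map]
    ext (i|i) (j|j) <;>
      simp [Matrix.fromBlocks, Matrix.map_apply, hA'def, hW'def, Matrix.one_apply, apply_ite]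
  rw [hFmap, hGmap, Matrix.fromBlocks_mul_fromRows, Matrix.fromBlocks_mul_fromRows,
    Matrix.fromRows_mul] at hFV
  have e1 : A' * V₁ = (V₁ + W' * V₂) * M := by
    have h := congrArg Matrix.toRows₁ hFV
    rw [Matrix.toRows₁_fromRows, Matrix.toRows₁_fromRows] at h
    simpa [Matrix.add_mul] using h
  have hv2 : V₂ = Q' * V₁ + A'ᵀ * V₂ * M := by
    have h := congrArg Matrix.toRows₂ hFV
    rw [Matrix.toRows₂_fromRows, Matrix.toRows₂_fromRows] at h
    simp only [Matrix.zero_mul, Matrix.one_mul, zero_add, Matrix.neg_mul] at h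
    rw [← h]; abel
  set S : Matrix (Fin n) (Fin n) ℂ := V₁ * M * V₁⁻¹ with hSdef
  have hSspec : ∀ γ ∈ spectrum ℂ S, ‖γ‖ < 1 := by
    intro γ hγ
    apply hM γ
    rw [spectrum.mem_iff] at hγ ⊢
    intro hu; apply hγ
    have hrew : algebraMap ℂ (Matrix (Fin n) (Fin n) ℂ) γ - S
        = V₁ * (algebraMap ℂ (Matrix (Fin n) (Fin n) ℂ) γ - M) * V₁⁻¹ := by
      rw [Matrix.mul_sub, Matrix.sub_mul, hSdef]
      congr 1
      simp [Algebra.algebraMap_eq_smul_one, mul_smul_comm, smul_mul_assoc, hV₁r]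
    rw [hrew]
    exact (hV₁.mul hu).mul hV₁inv
  have hSM : S * V₁ = V₁ * M := by
    rw [hSdef, Matrix.mul_assoc, hV₁l, Matrix.mul_one]
  have hPV : P * V₁ = V₂ := by
    rw [hP, Matrix.mul_assoc, hV₁l, Matrix.mul_one]
  have hPS : P * S = V₂ * M * V₁⁻¹ := by
    rw [hP, hSdef]
    calc V₂ * V₁⁻¹ * (V₁ * M * V₁⁻¹) = V₂ * (V₁⁻¹ * V₁) * M * V₁⁻¹ := by noncomm_ring
    _ = V₂ * M * V₁⁻¹ := by rw [hV₁l, Matrix.mul_one]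
  have hA'eq : A' = (1 + W' * P) * S := by
    have h1 : A' * V₁ = ((1 + W' * P) * S) * V₁ := by
      rw [e1, Matrix.mul_assoc, hSM, ← hPV]
      noncomm_ring
    calc A' = A' * V₁ * V₁⁻¹ := by rw [Matrix.mul_assoc, hV₁r, Matrix.mul_one]
    _ = ((1 + W' * P) * S) * V₁ * V₁⁻¹ := by rw [h1]
    _ = (1 + W' * P) * S := by rw [Matrix.mul_assoc, hV₁r, Matrix.mul_one]
  have hARE0 : P = Q' + A'ᵀ * P * S := by
    calc P = V₂ * V₁⁻¹ := hP
    _ = (Q' * V₁ + A'ᵀ * V₂ * M) * V₁⁻¹ := by rw [← hv2]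
    _ = Q' * (V₁ * V₁⁻¹) + A'ᵀ * (V₂ * M * V₁⁻¹) := by noncomm_ring
    _ = Q' + A'ᵀ * (P * S) := by rw [hV₁r, Matrix.mul_one, hPS]
    _ = Q' + A'ᵀ * P * S := by rw [Matrix.mul_assoc]
  -- symmetry of the real blocks, complexified
  have hWsym : Wᵀ = W := by
    have := hW.1
    ext i j
    have h := congrFun (congrFun this i) j
    simpa using h
  have hQsym : Qᵀ = Q := by
    have := hQ.1
    ext i j
    have h := congrFun (congrFun this i) j
    simpa using h
  have hW'H : W'ᴴ = W' := by
    rw [mapC_conjTranspose, hW'def, ← Matrix.transpose_map, hWsym]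
  have hQ'H : Q'ᴴ = Q' := by
    rw [mapC_conjTranspose, hQ'def, ← Matrix.transpose_map, hQsym]
  have hA'H : A'ᴴ = A'ᵀ := mapC_conjTranspose A
  have hA'tH : (A'ᵀ)ᴴ = A' := by
    rw [← hA'H, Matrix.conjTranspose_conjTranspose]
  -- Hermitian-ness of P via Stein equation
  have e1H : V₁ᴴ * A'ᴴ = Mᴴ * (V₁ᴴ + V₂ᴴ * W') := by
    have h := congrArg Matrix.conjTranspose e1
    simp only [Matrix.conjTranspose_mul, Matrix.conjTranspose_add, hW'H] at h
    exact h
  have hXA : V₁ᴴ * V₂ = V₁ᴴ * Q' * V₁ + Mᴴ * ((V₁ᴴ + V₂ᴴ * W') * (V₂ * M)) := by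
    calc V₁ᴴ * V₂ = V₁ᴴ * (Q' * V₁ + A'ᵀ * V₂ * M) := by rw [← hv2]
    _ = V₁ᴴ * Q' * V₁ + (V₁ᴴ * A'ᴴ) * (V₂ * M) := by rw [hA'H]; noncomm_ring
    _ = V₁ᴴ * Q' * V₁ + Mᴴ * ((V₁ᴴ + V₂ᴴ * W') * (V₂ * M)) := by
        rw [e1H]; noncomm_ring
  have hXB : V₂ᴴ * V₁ = V₁ᴴ * Q' * V₁ + Mᴴ * (V₂ᴴ * ((V₁ + W' * V₂) * M)) := by
    have hv2H : V₂ᴴ = V₁ᴴ * Q' + Mᴴ * V₂ᴴ * A' := by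
      have h := congrArg Matrix.conjTranspose hv2
      simp only [Matrix.conjTranspose_add, Matrix.conjTranspose_mul, hQ'H, hA'tH] at h
      conv_lhs => rw [h]
      simp only [Matrix.mul_assoc]
    calc V₂ᴴ * V₁ = (V₁ᴴ * Q' + Mᴴ * V₂ᴴ * A') * V₁ := by rw [← hv2H]
    _ = V₁ᴴ * Q' * V₁ + Mᴴ * (V₂ᴴ * (A' * V₁)) := by noncomm_ring
    _ = V₁ᴴ * Q' * V₁ + Mᴴ * (V₂ᴴ * ((V₁ + W' * V₂) * M)) := by rw [e1]
  have hXfix : V₁ᴴ * V₂ - V₂ᴴ * V₁ = Mᴴ * (V₁ᴴ * V₂ - V₂ᴴ * V₁) * M := by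
    have hL : V₁ᴴ * V₂ - V₂ᴴ * V₁
        = Mᴴ * ((V₁ᴴ + V₂ᴴ * W') * (V₂ * M)) - Mᴴ * (V₂ᴴ * ((V₁ + W' * V₂) * M)) := by
      rw [hXA, hXB]
      abel
    conv_lhs => rw [hL]
    simp only [Matrix.mul_add, Matrix.add_mul, Matrix.mul_sub, Matrix.sub_mul, Matrix.mul_assoc]
    abel
  have hsym : V₁ᴴ * V₂ = V₂ᴴ * V₁ :=
    sub_eq_zero.mp (stein_zero hn M _ hM hXfix)
  have hV₁Hdet : IsUnit V₁ᴴ.det := by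
    rw [Matrix.det_conjTranspose]
    exact hdet.star
  have hPH : P.IsHermitian := by
    show Pᴴ = P
    rw [hP, Matrix.conjTranspose_mul, Matrix.conjTranspose_nonsing_inv]
    calc V₁ᴴ⁻¹ * V₂ᴴ = V₁ᴴ⁻¹ * V₂ᴴ * (V₁ * V₁⁻¹) := by rw [hV₁r, Matrix.mul_one]
    _ = V₁ᴴ⁻¹ * (V₂ᴴ * V₁) * V₁⁻¹ := by noncomm_ring
    _ = V₁ᴴ⁻¹ * (V₁ᴴ * V₂) * V₁⁻¹ := by rw [hsym]
    _ = (V₁ᴴ⁻¹ * V₁ᴴ) * V₂ * V₁⁻¹ := by noncomm_ring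
    _ = V₂ * V₁⁻¹ := by rw [Matrix.nonsing_inv_mul _ hV₁Hdet, Matrix.one_mul]
  -- PSD
  have hQ'psd : Q'.PosSemidef := psd_map hQ
  have hW'psd : W'.PosSemidef := psd_map hW
  have hA'T : A'ᵀ = Sᴴ * (1 + P * W') := by
    rw [← hA'H, hA'eq]
    simp only [Matrix.conjTranspose_mul, Matrix.conjTranspose_add, Matrix.conjTranspose_one,
      hW'H, hPH.eq]
  have hCpsd : (P - Sᴴ * P * S).PosSemidef := by
    have hkey : P - Sᴴ * P * S = Q' + (P * S)ᴴ * W' * (P * S) := by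
      nth_rewrite 1 [hARE0]
      rw [hA'T]
      simp only [Matrix.conjTranspose_mul, hPH.eq, Matrix.mul_add, Matrix.add_mul,
        Matrix.one_mul, Matrix.mul_one, Matrix.mul_assoc, Matrix.sub_mul, Matrix.mul_sub]
      abel
    rw [hkey]
    exact hQ'psd.add (hW'psd.conjTranspose_mul_mul_same (P * S))
  have hPpsd : P.PosSemidef := psd_of_stein hn S P hSspec hPH hCpsd
  -- invertibility of 1 + W'P
  have hunit : IsUnit ((1 : Matrix (Fin n) (Fin n) ℂ) + W' * P) := by
    rw [Matrix.isUnit_iff_isUnit_det, isUnit_iff_ne_zero]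
    intro hdet0
    obtain ⟨v, hv, hv0⟩ := (Matrix.exists_mulVec_eq_zero_iff).mpr hdet0
    set y := P *ᵥ v with hy
    have hveq : v = -(W' *ᵥ y) := by
      have h1 : v + W' *ᵥ y = 0 := by
        have := hv0
        rw [Matrix.add_mulVec, Matrix.one_mulVec, ← Matrix.mulVec_mulVec] at this
        exact this
      exact eq_neg_of_add_eq_zero_left h1
    have h2 : (0:ℂ) ≤ star v ⬝ᵥ y := hPpsd.dotProduct_mulVec_nonneg v
    have h3 : (0:ℂ) ≤ star y ⬝ᵥ (W' *ᵥ y) := hW'psd.dotProduct_mulVec_nonneg y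
    have hxy : star v ⬝ᵥ y = -(star y ⬝ᵥ (W' *ᵥ y)) := by
      have hsv : star v = -(star y ᵥ* W') := by
        rw [hveq, star_neg, Matrix.star_mulVec, hW'H]
      rw [hsv, neg_dotProduct, ← Matrix.dotProduct_mulVec]
    have h4 : star y ⬝ᵥ (W' *ᵥ y) = 0 := by
      refine le_antisymm ?_ h3
      rw [← neg_nonneg, ← hxy]
      exact h2
    have h5 : W' *ᵥ y = 0 := (hW'psd.dotProduct_mulVec_zero_iff y).mp h4
    exact hv (by rw [hveq, h5, neg_zero])
  have hdetWP : IsUnit ((1 : Matrix (Fin n) (Fin n) ℂ) + W' * P).det :=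
    (Matrix.isUnit_iff_isUnit_det _).mp hunit
  have hSsolve : S = ((1 : Matrix (Fin n) (Fin n) ℂ) + W' * P)⁻¹ * A' := by
    rw [hA'eq, ← Matrix.mul_assoc, Matrix.nonsing_inv_mul _ hdetWP, Matrix.one_mul]
  refine ⟨hPpsd, hunit, ?_⟩
  calc P = Q' + A'ᵀ * P * S := hARE0
  _ = Q' + A'ᵀ * P * (((1 : Matrix (Fin n) (Fin n) ℂ) + W' * P)⁻¹ * A') := by rw [← hSsolve]
  _ = Q' + A'ᵀ * P * ((1 : Matrix (Fin n) (Fin n) ℂ) + W' * P)⁻¹ * A' := by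
      simp only [Matrix.mul_assoc]
end

section
/- Let A, Q, W ∈ ℝ^{n×n} with Q and W symmetric positive semidefinite, and assume (A, √Q) is observable in the PBH sense: there exist no γ ∈ ℂ and nonzero v ∈ ℂⁿ such that A v = γ v and Q v = 0. Let P ∈ ℝ^{n×n} be symmetric positive semidefinite with I + W P invertible and P = Q + Aᵀ P ( I + W P )⁻¹ A. Then the closed-loop mean-state matrix A − W ( I + P W )⁻¹ P A equals ( I + W P )⁻¹ A, and every complex eigenvalue of ( I + W P )⁻¹ A has modulus strictly less than 1 (its spectral radius is less than 1). -/
set_option maxHeartbeats 1000000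

open Matrix ComplexOrder

private noncomputable def cmap {n : ℕ} (M : Matrix (Fin n) (Fin n) ℝ) :
    Matrix (Fin n) (Fin n) ℂ := M.map ⇑Complex.ofRealHom

private lemma cmap_mul {n : ℕ} (M N : Matrix (Fin n) (Fin n) ℝ) :
    cmap (M * N) = cmap M * cmap N := Matrix.map_mul

private lemma cmap_add {n : ℕ} (M N : Matrix (Fin n) (Fin n) ℝ) :
    cmap (M + N) = cmap M + cmap N := map_add Complex.ofRealHom.mapMatrix M N

private lemma cmap_one {n : ℕ} : cmap (1 : Matrix (Fin n) (Fin n) ℝ) = 1 :=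
  map_one Complex.ofRealHom.mapMatrix

private lemma cmap_conjTranspose {n : ℕ} (M : Matrix (Fin n) (Fin n) ℝ) :
    (cmap M)ᴴ = cmap Mᵀ := by
  ext i j
  simp [cmap, Matrix.conjTranspose_apply]

private lemma quad_conj {n : ℕ} (M G : Matrix (Fin n) (Fin n) ℂ) (v : Fin n → ℂ) :
    star v ⬝ᵥ ((Gᴴ * M * G) *ᵥ v) = star (G *ᵥ v) ⬝ᵥ (M *ᵥ (G *ᵥ v)) := by
  rw [star_mulVec, dotProduct_mulVec, dotProduct_mulVec, dotProduct_mulVec,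
    vecMul_vecMul, vecMul_vecMul, Matrix.mul_assoc]

open scoped MatrixOrder in
private lemma map_psd {n : ℕ} {M : Matrix (Fin n) (Fin n) ℝ} (hM : M.PosSemidef) :
    (cmap M).PosSemidef := by
  obtain ⟨B, rfl⟩ : ∃ B : Matrix (Fin n) (Fin n) ℝ, M = Bᴴ * B := by
    have h0 : 0 ≤ M := Matrix.nonneg_iff_posSemidef.mpr hM
    exact ⟨CFC.sqrt M, by
      rw [← Matrix.star_eq_conjTranspose, (CFC.sqrt_nonneg M).isSelfAdjoint.star_eq,
        CFC.sqrt_mul_sqrt_self M h0]⟩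
  have h : cmap Bᴴ = (cmap B)ᴴ := by
    ext i j; simp [cmap, Matrix.conjTranspose_apply]
  rw [cmap_mul, h]
  exact Matrix.posSemidef_conjTranspose_mul_self _

private lemma psd_quad {n : ℕ} {M : Matrix (Fin n) (Fin n) ℝ} (hM : M.PosSemidef)
    (v : Fin n → ℂ) :
    ∃ r : ℝ, 0 ≤ r ∧ star v ⬝ᵥ ((cmap M) *ᵥ v) = (r : ℂ) := by
  have h := (map_psd hM).dotProduct_mulVec_nonneg v
  obtain ⟨h1, h2⟩ := Complex.nonneg_iff.mp h
  exact ⟨(star v ⬝ᵥ ((cmap M) *ᵥ v)).re, h1, by apply Complex.ext <;> simp [← h2]⟩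

/-- Closed-loop stability: if `P ⪰ 0` solves the ARE
`P = Q + AᵀP(I + WP)⁻¹A` with `(A, √Q)` PBH-observable, then
`A − W(I + PW)⁻¹PA = (I + WP)⁻¹A` and every complex eigenvalue of `(I + WP)⁻¹A`
has modulus strictly less than `1`. -/
theorem stmt_14 {n : ℕ} (hn : 0 < n)
    (A Q W : Matrix (Fin n) (Fin n) ℝ) (hQ : Q.PosSemidef) (hW : W.PosSemidef)
    (hobs : ¬ ∃ (γ : ℂ) (v : Fin n → ℂ), v ≠ 0 ∧
      (A.map (fun r : ℝ => (r : ℂ))) *ᵥ v = γ • v ∧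
      (Q.map (fun r : ℝ => (r : ℂ))) *ᵥ v = 0)
    (P : Matrix (Fin n) (Fin n) ℝ) (hP : P.PosSemidef)
    (hinv : IsUnit ((1 : Matrix (Fin n) (Fin n) ℝ) + W * P))
    (hric : P = Q + Aᵀ * P * ((1 : Matrix (Fin n) (Fin n) ℝ) + W * P)⁻¹ * A) :
    A - W * ((1 : Matrix (Fin n) (Fin n) ℝ) + P * W)⁻¹ * P * A =
      ((1 : Matrix (Fin n) (Fin n) ℝ) + W * P)⁻¹ * A ∧
    ∀ γ ∈ spectrum ℂ
        ((((1 : Matrix (Fin n) (Fin n) ℝ) + W * P)⁻¹ * A).map (fun r : ℝ => (r : ℂ))),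
      ‖γ‖ < 1 := by
  have hPT : Pᵀ = P := hP.1
  have hWT : Wᵀ = W := hW.1
  have hdet : IsUnit ((1 + W * P).det) := (Matrix.isUnit_iff_isUnit_det _).mp hinv
  set C : Matrix (Fin n) (Fin n) ℝ := (1 + W * P)⁻¹ with hCdef
  have hCr : (1 + W * P) * C = 1 := Matrix.mul_nonsing_inv _ hdet
  have hCl : C * (1 + W * P) = 1 := Matrix.nonsing_inv_mul _ hdet
  have hCWP : C * W * P = 1 - C := by
    have h1 : C + C * W * P = 1 := by rw [← hCl]; noncomm_ring
    exact eq_sub_of_add_eq' h1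
  have hright : (1 + P * W) * (1 - P * C * W) = 1 := by
    have h1 : (1 + P * W) * (1 - P * C * W)
        = 1 + P * W - P * ((1 + W * P) * C) * W := by noncomm_ring
    rw [h1, hCr]; noncomm_ring
  have hinv2eq : (1 + P * W)⁻¹ = 1 - P * C * W := Matrix.inv_eq_right_inv hright
  have hA' : (1 + W * P) * (C * A) = A := by
    rw [← Matrix.mul_assoc, hCr, Matrix.one_mul]
  -- Part 1
  have part1 : A - W * (1 + P * W)⁻¹ * P * A = C * A := by
    rw [hinv2eq]
    have h2 : W * (1 - P * C * W) * P * A = W * (P * C) * A := by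
      have h3 : (1 - P * C * W) * P = P * C := by
        have h4 : (1 - P * C * W) * P = P - P * (C * W * P) := by noncomm_ring
        rw [h4, hCWP]; noncomm_ring
      calc W * (1 - P * C * W) * P * A = W * ((1 - P * C * W) * P) * A := by noncomm_ring
        _ = W * (P * C) * A := by rw [h3]
    rw [h2, sub_eq_iff_eq_add]
    calc A = ((1 + W * P) * C) * A := by rw [hCr, Matrix.one_mul]
      _ = C * A + W * (P * C) * A := by noncomm_ring
  refine ⟨part1, ?_⟩
  -- Lyapunov equation
  have hAT : Aᵀ = (C * A)ᵀ * (1 + P * W) := by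
    conv_lhs => rw [← hA']
    simp only [Matrix.transpose_mul, Matrix.transpose_add, Matrix.transpose_one, hPT, hWT]
  have hlyap : P = Q + ((C * A)ᵀ * P * (C * A) + (C * A)ᵀ * (P * W * P) * (C * A)) := by
    conv_lhs => rw [hric]
    rw [hAT]
    noncomm_ring
  -- complex part
  intro γ hγ
  by_contra hlt
  push_neg at hlt
  have hγ' : γ ∈ spectrum ℂ (cmap (C * A)) := hγ
  have hnu : ¬ IsUnit (algebraMap ℂ (Matrix (Fin n) (Fin n) ℂ) γ - cmap (C * A)) :=
    spectrum.mem_iff.mp hγ'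
  have hdet0 : (γ • (1 : Matrix (Fin n) (Fin n) ℂ) - cmap (C * A)).det = 0 := by
    by_contra h
    exact hnu (by
      rw [Algebra.algebraMap_eq_smul_one]
      exact (Matrix.isUnit_iff_isUnit_det _).mpr (isUnit_iff_ne_zero.mpr h))
  obtain ⟨v, hv0, hv⟩ := Matrix.exists_mulVec_eq_zero_iff.mpr hdet0
  have hFv : cmap (C * A) *ᵥ v = γ • v := by
    rw [Matrix.sub_mulVec, Matrix.smul_mulVec, Matrix.one_mulVec, sub_eq_zero] at hv
    exact hv.symm
  have hPcH : (cmap P)ᴴ = cmap P := by rw [cmap_conjTranspose, hPT]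
  have hlyapC : cmap P = cmap Q + ((cmap (C * A))ᴴ * cmap P * cmap (C * A)
      + (cmap (C * A))ᴴ * (cmap P * cmap W * cmap P) * cmap (C * A)) := by
    have h6 := congrArg cmap hlyap
    simp only [cmap_add, cmap_mul, ← cmap_conjTranspose] at h6
    rw [← cmap_mul C A] at h6
    exact h6
  -- quadratic forms
  have hqPv : star v ⬝ᵥ (((cmap (C * A))ᴴ * cmap P * cmap (C * A)) *ᵥ v)
      = (starRingEnd ℂ γ * γ) * (star v ⬝ᵥ ((cmap P) *ᵥ v)) := by
    rw [quad_conj, hFv, Matrix.mulVec_smul, star_smul, smul_dotProduct, dotProduct_smul]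
    simp [mul_assoc, mul_comm, mul_left_comm]
  have hsmulsmul : ∀ (M : Matrix (Fin n) (Fin n) ℂ),
      star (γ • v) ⬝ᵥ (M *ᵥ (γ • v)) = (starRingEnd ℂ γ * γ) * (star v ⬝ᵥ (M *ᵥ v)) := by
    intro M
    rw [Matrix.mulVec_smul, star_smul, smul_dotProduct, dotProduct_smul]
    simp [mul_assoc, mul_comm, mul_left_comm]
  have hqWv : star v ⬝ᵥ (((cmap (C * A))ᴴ * (cmap P * cmap W * cmap P) * cmap (C * A)) *ᵥ v)
      = (starRingEnd ℂ γ * γ) * (star (cmap P *ᵥ v) ⬝ᵥ (cmap W *ᵥ (cmap P *ᵥ v))) := by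
    rw [quad_conj, hFv, hsmulsmul]
    congr 1
    have h8 : cmap P * cmap W * cmap P = (cmap P)ᴴ * cmap W * cmap P := by rw [hPcH]
    rw [h8, quad_conj]
  -- scalars
  obtain ⟨pr, hpr0, hpr⟩ := psd_quad hP v
  obtain ⟨qr, hqr0, hqr⟩ := psd_quad hQ v
  obtain ⟨wr, hwr0, hwr⟩ := psd_quad hW (cmap P *ᵥ v)
  have hs : starRingEnd ℂ γ * γ = ((Complex.normSq γ : ℝ) : ℂ) := by
    rw [mul_comm, Complex.mul_conj]
  have hs1 : (1 : ℝ) ≤ Complex.normSq γ := by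
    have h9 := Complex.sq_norm γ
    nlinarith [hlt]
  have hkey : (pr : ℂ) = (qr : ℂ) + (((Complex.normSq γ : ℝ) : ℂ) * pr
      + ((Complex.normSq γ : ℝ) : ℂ) * wr) := by
    have h10 := congrArg (fun M => star v ⬝ᵥ (M *ᵥ v)) hlyapC
    simp only [Matrix.add_mulVec, dotProduct_add] at h10
    rw [hpr, hqr, hqPv, hqWv, hpr, hwr, hs] at h10
    exact h10
  have hkeyR : pr = qr + (Complex.normSq γ * pr + Complex.normSq γ * wr) := by
    exact_mod_cast hkey
  have hq0 : qr = 0 := by nlinarith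
  have hw0 : wr = 0 := by nlinarith
  -- kernel facts
  have hQv : cmap Q *ᵥ v = 0 := by
    refine ((map_psd hQ).dotProduct_mulVec_zero_iff v).mp ?_
    rw [hqr, hq0]; simp
  have hWu : cmap W *ᵥ (cmap P *ᵥ v) = 0 := by
    refine ((map_psd hW).dotProduct_mulVec_zero_iff _).mp ?_
    rw [hwr, hw0]; simp
  -- eigen relation for A
  have hAc : (1 + cmap W * cmap P) * cmap (C * A) = cmap A := by
    rw [← cmap_mul W P, ← cmap_one (n := n), ← cmap_add, ← cmap_mul, hA']
  have hAv : (cmap A) *ᵥ v = γ • v := by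
    rw [← hAc, ← Matrix.mulVec_mulVec, hFv, Matrix.mulVec_smul, Matrix.add_mulVec,
      Matrix.one_mulVec, ← Matrix.mulVec_mulVec, hWu]
    simp
  exact hobs ⟨γ, v, hv0, hAv, hQv⟩
end

section
/- Let A, Q, W ∈ ℝ^{n×n} with Q and W symmetric positive semidefinite, (A, √Q) observable in the PBH sense (there exist no γ ∈ ℂ and nonzero v ∈ ℂⁿ with A v = γ v and Q v = 0), and (A, √W) stabilizable in the PBH sense (there exist no γ ∈ ℂ with |γ| ≥ 1 and nonzero v ∈ ℂⁿ with Aᵀ v = γ v and W v = 0). If P₁ and P₂ are symmetric positive semidefinite real matrices such that I + W Pᵢ is invertible and Pᵢ = Q + Aᵀ Pᵢ ( I + W Pᵢ )⁻¹ A for i = 1, 2, then P₁ = P₂. -/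
open Matrix Filter Topology
open scoped NNReal ENNReal

attribute [local instance] Matrix.linftyOpNormedRing Matrix.linftyOpNormedAlgebra

noncomputable section Stmt15Aux
variable {n : ℕ}

private abbrev cm (M : Matrix (Fin n) (Fin n) ℝ) : Matrix (Fin n) (Fin n) ℂ :=
  M.map (fun r : ℝ => (r : ℂ))

private lemma cm_eq (M : Matrix (Fin n) (Fin n) ℝ) :
    cm M = (Complex.ofRealHom.mapMatrix : Matrix (Fin n) (Fin n) ℝ →+* _) M := rfl

private lemma cm_mul (M N : Matrix (Fin n) (Fin n) ℝ) : cm (M * N) = cm M * cm N := by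
  simp [cm_eq, _root_.map_mul]

private lemma cm_add (M N : Matrix (Fin n) (Fin n) ℝ) : cm (M + N) = cm M + cm N := by
  simp [cm_eq, _root_.map_add]

private lemma cm_transpose (M : Matrix (Fin n) (Fin n) ℝ) : cm (Mᵀ) = (cm M)ᵀ := by
  ext i j; simp [cm]

private lemma cm_mulVec_star (M : Matrix (Fin n) (Fin n) ℝ) (v : Fin n → ℂ) :
    cm M *ᵥ star v = star (cm M *ᵥ v) := by
  ext i
  simp [Matrix.mulVec, dotProduct, map_sum, Complex.conj_ofReal, mul_comm]

private lemma psd_symm {P : Matrix (Fin n) (Fin n) ℝ} (hP : P.PosSemidef) : Pᵀ = P := by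
  ext i j; have := congrFun (congrFun hP.1 i) j; simpa using this

private lemma star_vecMul_symm (P : Matrix (Fin n) (Fin n) ℝ) (hPs : Pᵀ = P)
    (v : Fin n → ℂ) : star v ᵥ* cm P = star (cm P *ᵥ v) := by
  calc star v ᵥ* cm P = star v ᵥ* cm (Pᵀ) := by rw [hPs]
    _ = star v ᵥ* (cm P)ᵀ := by rw [cm_transpose]
    _ = cm P *ᵥ star v := vecMul_transpose ..
    _ = star (cm P *ᵥ v) := cm_mulVec_star ..

private lemma quad (X : Matrix (Fin n) (Fin n) ℝ) (hX : X.PosSemidef) (v : Fin n → ℂ) :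
    ∃ t : ℝ, 0 ≤ t ∧ star v ⬝ᵥ (cm X *ᵥ v) = (t : ℂ) ∧ (t = 0 → cm X *ᵥ v = 0) := by
  obtain ⟨S, hS, hSX⟩ : ∃ S : Matrix (Fin n) (Fin n) ℝ, S.PosSemidef ∧ S * S = X :=
    by open scoped MatrixOrder in exact ⟨CFC.sqrt X, (CFC.sqrt_nonneg X).posSemidef, CFC.sqrt_mul_sqrt_self X hX.nonneg⟩
  set w := cm S *ᵥ v with hw
  have hsv : star v ᵥ* cm S = star w := star_vecMul_symm S (psd_symm hS) v
  have hXv : cm X *ᵥ v = cm S *ᵥ w := by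
    rw [hw, mulVec_mulVec, ← cm_mul, hSX]
  refine ⟨∑ i, Complex.normSq (w i), Finset.sum_nonneg fun i _ => Complex.normSq_nonneg _, ?_, ?_⟩
  · rw [hXv, dotProduct_mulVec, hsv]
    simp [dotProduct, Complex.normSq_eq_conj_mul_self]
  · intro ht
    have hw0 : w = 0 := by
      funext i
      have : Complex.normSq (w i) = 0 :=
        (Finset.sum_eq_zero_iff_of_nonneg
          (fun i _ => Complex.normSq_nonneg (w i))).mp ht i (Finset.mem_univ i)
      simpa [Complex.normSq_eq_zero] using this
    rw [hXv, hw0, mulVec_zero]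

private lemma pow_tendsto_zero [NeZero n] (a : Matrix (Fin n) (Fin n) ℂ)
    (h : ∀ μ ∈ spectrum ℂ a, ‖μ‖₊ < 1) :
    Tendsto (fun k : ℕ => ‖a ^ k‖) atTop (𝓝 0) := by
  have hρ : spectralRadius ℂ a < (1 : ℝ≥0) := spectrum.spectralRadius_lt_of_forall_lt a h
  obtain ⟨c, hc1, hc2⟩ := ENNReal.lt_iff_exists_nnreal_btwn.mp hρ
  have hgel := spectrum.pow_nnnorm_pow_one_div_tendsto_nhds_spectralRadius a
  have hev : ∀ᶠ k : ℕ in atTop, (‖a ^ k‖₊ : ℝ≥0∞) ^ (1/(k:ℝ)) < (c : ℝ≥0∞) :=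
    hgel.eventually_lt_const hc1
  have hc2' : (c : ℝ) < 1 := by exact_mod_cast hc2
  have hbound : ∀ᶠ k : ℕ in atTop, ‖a ^ k‖ ≤ (c:ℝ)^k := by
    filter_upwards [hev, eventually_ge_atTop 1] with k hk hk1
    have hkne : (k : ℝ) ≠ 0 := Nat.cast_ne_zero.mpr (by omega)
    have h2 : ((‖a ^ k‖₊ : ℝ≥0∞) ^ (1/(k:ℝ))) ^ (k:ℝ) < (c : ℝ≥0∞) ^ (k:ℝ) :=
      ENNReal.rpow_lt_rpow hk (by positivity)
    rw [← ENNReal.rpow_mul, one_div_mul_cancel hkne, ENNReal.rpow_one,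
      ENNReal.rpow_natCast] at h2
    have h3 : ‖a ^ k‖₊ < c ^ k := by
      rw [show ((c:ℝ≥0∞) ^ k) = ((c ^ k : ℝ≥0) : ℝ≥0∞) by push_cast; ring] at h2
      exact_mod_cast h2
    calc ‖a ^ k‖ = ((‖a ^ k‖₊ : ℝ≥0) : ℝ) := rfl
      _ ≤ ((c ^ k : ℝ≥0) : ℝ) := by exact_mod_cast h3.le
      _ = (c:ℝ)^k := by push_cast; ring
  exact squeeze_zero' (Eventually.of_forall fun k => norm_nonneg _) hbound
    (tendsto_pow_atTop_nhds_zero_of_lt_one c.coe_nonneg hc2')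

private lemma spectrum_transpose (M : Matrix (Fin n) (Fin n) ℂ) :
    spectrum ℂ (Mᵀ) = spectrum ℂ M := by
  ext μ
  have key : (algebraMap ℂ (Matrix (Fin n) (Fin n) ℂ)) μ - Mᵀ
      = ((algebraMap ℂ (Matrix (Fin n) (Fin n) ℂ)) μ - M)ᵀ := by
    rw [Matrix.transpose_sub]
    congr 1
    simp [Matrix.algebraMap_eq_diagonal]
  simp only [spectrum.mem_iff, not_iff_not, Matrix.isUnit_iff_isUnit_det, key,
    Matrix.det_transpose]

private lemma eig_of_mem_spectrum (M : Matrix (Fin n) (Fin n) ℂ) {μ : ℂ}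
    (h : μ ∈ spectrum ℂ M) : ∃ v : Fin n → ℂ, v ≠ 0 ∧ M *ᵥ v = μ • v := by
  have h2 : μ ∈ spectrum ℂ (Matrix.toLinAlgEquiv' M) := by
    rwa [AlgEquiv.spectrum_eq]
  have h3 : Module.End.HasEigenvalue (Matrix.toLinAlgEquiv' M) μ :=
    (Module.End.hasEigenvalue_iff_mem_spectrum).mpr h2
  obtain ⟨v, hv⟩ := h3.exists_hasEigenvector
  refine ⟨v, hv.right, ?_⟩
  have := hv.apply_eq_smul
  rwa [Matrix.toLinAlgEquiv'_apply] at this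

private lemma inv_facts (T : Matrix (Fin n) (Fin n) ℝ) (h : IsUnit T) :
    T * T⁻¹ = 1 ∧ T⁻¹ * T = 1 := by
  have hd := (Matrix.isUnit_iff_isUnit_det T).mp h
  exact ⟨Matrix.mul_nonsing_inv T hd, Matrix.nonsing_inv_mul T hd⟩

private lemma swap_inv (W P : Matrix (Fin n) (Fin n) ℝ) (hPs : Pᵀ = P) (hWs : Wᵀ = W)
    (hinv : IsUnit (1 + W * P)) :
    P * (1 + W * P)⁻¹ = ((1 + W * P)⁻¹)ᵀ * P := by
  set T := 1 + W * P with hT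
  obtain ⟨hTr, hTl⟩ := inv_facts T hinv
  have hTt : Tᵀ = 1 + P * W := by
    rw [hT, Matrix.transpose_add, Matrix.transpose_one, Matrix.transpose_mul, hPs, hWs]
  have hswap : Tᵀ * P = P * T := by
    rw [hTt, hT]; noncomm_ring
  have hTtl : (T⁻¹)ᵀ * Tᵀ = 1 := by
    rw [← Matrix.transpose_mul, hTr, Matrix.transpose_one]
  calc P * T⁻¹ = ((T⁻¹)ᵀ * Tᵀ) * (P * T⁻¹) := by rw [hTtl, one_mul]
    _ = (T⁻¹)ᵀ * ((Tᵀ * P) * T⁻¹) := by noncomm_ring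
    _ = (T⁻¹)ᵀ * (P * (T * T⁻¹)) := by rw [hswap]; noncomm_ring
    _ = (T⁻¹)ᵀ * P := by rw [hTr, mul_one]

private lemma closed_form (A Q W P : Matrix (Fin n) (Fin n) ℝ) (hPs : Pᵀ = P) (hWs : Wᵀ = W)
    (hinv : IsUnit (1 + W * P))
    (hric : P = Q + Aᵀ * P * (1 + W * P)⁻¹ * A) :
    A = ((1 + W * P)⁻¹ * A) + W * (P * ((1 + W * P)⁻¹ * A)) ∧
    P = Q + ((1 + W * P)⁻¹ * A)ᵀ * P * ((1 + W * P)⁻¹ * A)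
      + ((1 + W * P)⁻¹ * A)ᵀ * (P * W * P) * ((1 + W * P)⁻¹ * A) := by
  set T := 1 + W * P with hT
  obtain ⟨hTr, hTl⟩ := inv_facts T hinv
  set F := T⁻¹ * A with hF
  have hAF : A = T * F := by rw [hF, ← mul_assoc, hTr, one_mul]
  constructor
  · calc A = T * F := hAF
      _ = F + W * (P * F) := by rw [hT]; noncomm_ring
  · have h1 : Aᵀ * P * T⁻¹ * A = Fᵀ * (P + P * W * P) * F := by
      have h2 : P * T⁻¹ = (T⁻¹)ᵀ * P := swap_inv W P hPs hWs hinv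
      have h3 : Aᵀ * (T⁻¹)ᵀ = Fᵀ := by rw [hF, Matrix.transpose_mul]
      calc Aᵀ * P * T⁻¹ * A = Aᵀ * (P * T⁻¹) * A := by noncomm_ring
        _ = Aᵀ * ((T⁻¹)ᵀ * P) * A := by rw [h2]
        _ = (Aᵀ * (T⁻¹)ᵀ) * P * A := by noncomm_ring
        _ = Fᵀ * P * A := by rw [h3]
        _ = Fᵀ * P * (T * F) := by rw [← hAF]
        _ = Fᵀ * (P * T) * F := by noncomm_ring
        _ = Fᵀ * (P + P * W * P) * F := by rw [hT]; noncomm_ring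
    calc P = Q + Aᵀ * P * T⁻¹ * A := hric
      _ = Q + Fᵀ * (P + P * W * P) * F := by rw [h1]
      _ = Q + Fᵀ * P * F + Fᵀ * (P * W * P) * F := by noncomm_ring

private lemma diff_form (A Q W P₁ P₂ : Matrix (Fin n) (Fin n) ℝ)
    (hP₁s : P₁ᵀ = P₁) (hWs : Wᵀ = W)
    (hinv₁ : IsUnit (1 + W * P₁)) (hinv₂ : IsUnit (1 + W * P₂))
    (hric₁ : P₁ = Q + Aᵀ * P₁ * (1 + W * P₁)⁻¹ * A)
    (hric₂ : P₂ = Q + Aᵀ * P₂ * (1 + W * P₂)⁻¹ * A) :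
    P₁ - P₂ = ((1 + W * P₁)⁻¹ * A)ᵀ * ((P₁ - P₂) * ((1 + W * P₂)⁻¹ * A)) := by
  set T₁ := 1 + W * P₁ with hT₁
  set T₂ := 1 + W * P₂ with hT₂
  obtain ⟨hT₁r, hT₁l⟩ := inv_facts T₁ hinv₁
  obtain ⟨hT₂r, hT₂l⟩ := inv_facts T₂ hinv₂
  have h2 : P₁ * T₁⁻¹ = (T₁⁻¹)ᵀ * P₁ := swap_inv W P₁ hP₁s hWs hinv₁
  have hkey : P₁ * T₁⁻¹ - P₂ * T₂⁻¹ = (T₁⁻¹)ᵀ * ((P₁ - P₂) * T₂⁻¹) := by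
    have e1 : (P₁ - P₂) * T₂⁻¹ = P₁ * T₂ * T₂⁻¹ - (T₁ᵀ * P₂) * T₂⁻¹ := by
      have : P₁ - P₂ = P₁ * T₂ - T₁ᵀ * P₂ := by
        rw [hT₁, hT₂, Matrix.transpose_add, Matrix.transpose_one, Matrix.transpose_mul,
          hP₁s, hWs]
        noncomm_ring
      rw [this]; noncomm_ring
    have hT₁tinv : (T₁⁻¹)ᵀ * T₁ᵀ = 1 := by
      rw [← Matrix.transpose_mul, hT₁r, Matrix.transpose_one]
    calc P₁ * T₁⁻¹ - P₂ * T₂⁻¹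
        = (T₁⁻¹)ᵀ * P₁ - P₂ * T₂⁻¹ := by rw [h2]
      _ = (T₁⁻¹)ᵀ * P₁ - ((T₁⁻¹)ᵀ * T₁ᵀ) * (P₂ * T₂⁻¹) := by rw [hT₁tinv, one_mul]
      _ = (T₁⁻¹)ᵀ * (P₁ * T₂ * T₂⁻¹ - (T₁ᵀ * P₂) * T₂⁻¹) := by
          rw [mul_assoc P₁ T₂ T₂⁻¹, hT₂r, mul_one]; noncomm_ring
      _ = (T₁⁻¹)ᵀ * ((P₁ - P₂) * T₂⁻¹) := by rw [e1]
  calc P₁ - P₂ = Aᵀ * P₁ * T₁⁻¹ * A - Aᵀ * P₂ * T₂⁻¹ * A := by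
        conv_lhs => rw [hric₁, hric₂]
        noncomm_ring
    _ = Aᵀ * (P₁ * T₁⁻¹ - P₂ * T₂⁻¹) * A := by noncomm_ring
    _ = Aᵀ * ((T₁⁻¹)ᵀ * ((P₁ - P₂) * T₂⁻¹)) * A := by rw [hkey]
    _ = (T₁⁻¹ * A)ᵀ * ((P₁ - P₂) * (T₂⁻¹ * A)) := by
        rw [Matrix.transpose_mul]; noncomm_ring

private lemma closedLoop_stable (A Q W P F : Matrix (Fin n) (Fin n) ℝ)
    (hQ : Q.PosSemidef) (hW : W.PosSemidef) (hP : P.PosSemidef)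
    (hA : A = F + W * (P * F))
    (hric : P = Q + Fᵀ * P * F + Fᵀ * (P * W * P) * F)
    (hobs : ¬ ∃ (γ : ℂ) (v : Fin n → ℂ), v ≠ 0 ∧
      (A.map (fun r : ℝ => (r : ℂ))) *ᵥ v = γ • v ∧
      (Q.map (fun r : ℝ => (r : ℂ))) *ᵥ v = 0) :
    ∀ μ ∈ spectrum ℂ (cm F), ‖μ‖₊ < 1 := by
  intro μ hμ
  by_contra hge
  push_neg at hge
  have hge' : 1 ≤ Complex.normSq μ := by
    have h1 : (1:ℝ) ≤ ‖μ‖ := by exact_mod_cast hge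
    nlinarith [Complex.normSq_eq_norm_sq μ]
  obtain ⟨v, hv0, hFv⟩ := eig_of_mem_spectrum (cm F) hμ
  obtain ⟨pr, hpr0, hpre, _⟩ := quad P hP v
  obtain ⟨qr, hqr0, hqre, hqr⟩ := quad Q hQ v
  set u := cm P *ᵥ v with hu
  obtain ⟨rr, hrr0, hrre, hrr⟩ := quad W hW u
  have hPWP : star v ⬝ᵥ (cm (P * W * P) *ᵥ v) = (rr:ℂ) := by
    calc star v ⬝ᵥ (cm (P * W * P) *ᵥ v)
        = star v ⬝ᵥ (cm P *ᵥ (cm W *ᵥ u)) := by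
          rw [hu, mulVec_mulVec, mulVec_mulVec, ← cm_mul, ← cm_mul]
      _ = (star v ᵥ* cm P) ⬝ᵥ (cm W *ᵥ u) := dotProduct_mulVec ..
      _ = star u ⬝ᵥ (cm W *ᵥ u) := by rw [star_vecMul_symm P (psd_symm hP) v]
      _ = (rr:ℂ) := hrre
  have hFXF : ∀ X : Matrix (Fin n) (Fin n) ℝ,
      star v ⬝ᵥ (cm (Fᵀ * X * F) *ᵥ v)
        = (Complex.normSq μ : ℂ) * (star v ⬝ᵥ (cm X *ᵥ v)) := by
    intro X
    have hstep : cm (Fᵀ * X * F) *ᵥ v = cm (Fᵀ) *ᵥ (cm X *ᵥ (μ • v)) := by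
      rw [cm_mul, cm_mul, ← mulVec_mulVec, ← mulVec_mulVec, hFv]
    rw [hstep, dotProduct_mulVec]
    have hsv : star v ᵥ* cm (Fᵀ) = (starRingEnd ℂ μ) • star v := by
      calc star v ᵥ* cm (Fᵀ) = star v ᵥ* (cm F)ᵀ := by rw [cm_transpose]
        _ = cm F *ᵥ star v := vecMul_transpose ..
        _ = star (cm F *ᵥ v) := cm_mulVec_star ..
        _ = star (μ • v) := by rw [hFv]
        _ = (starRingEnd ℂ μ) • star v := by rw [star_smul]; rfl
    rw [hsv, mulVec_smul, smul_dotProduct, dotProduct_smul, smul_eq_mul, smul_eq_mul,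
      ← mul_assoc, Complex.normSq_eq_conj_mul_self]
  have hmain : (pr : ℂ) = (qr : ℂ) + (Complex.normSq μ : ℂ) * (pr : ℂ)
      + (Complex.normSq μ : ℂ) * (rr : ℂ) := by
    have hcric : cm P = cm Q + cm (Fᵀ * P * F) + cm (Fᵀ * (P * W * P) * F) := by
      rw [← cm_add, ← cm_add, ← hric]
    calc (pr : ℂ) = star v ⬝ᵥ (cm P *ᵥ v) := hpre.symm
      _ = star v ⬝ᵥ (cm Q *ᵥ v) + star v ⬝ᵥ (cm (Fᵀ * P * F) *ᵥ v)
          + star v ⬝ᵥ (cm (Fᵀ * (P * W * P) * F) *ᵥ v) := by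
          rw [hcric, add_mulVec, add_mulVec, dotProduct_add, dotProduct_add]
      _ = (qr : ℂ) + (Complex.normSq μ : ℂ) * (pr : ℂ)
          + (Complex.normSq μ : ℂ) * (rr : ℂ) := by
          rw [hqre, hFXF P, hFXF (P * W * P), hpre, hPWP]
  have heq : pr = qr + Complex.normSq μ * pr + Complex.normSq μ * rr := by
    exact_mod_cast hmain
  have hqr0' : qr = 0 := by nlinarith
  have hrr0' : rr = 0 := by nlinarith
  have hQv : cm Q *ᵥ v = 0 := hqr hqr0'
  have hWu : cm W *ᵥ u = 0 := hrr hrr0'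
  have hAv : cm A *ᵥ v = μ • v := by
    have : cm A = cm F + cm W * (cm P * cm F) := by
      rw [hA, cm_add, cm_mul, cm_mul]
    rw [this, add_mulVec, ← mulVec_mulVec, ← mulVec_mulVec, hFv, mulVec_smul, ← hu,
      mulVec_smul, hWu, smul_zero, add_zero]
  exact hobs ⟨μ, v, hv0, hAv, hQv⟩

end Stmt15Aux

/-- Uniqueness of the symmetric PSD solution of the ARE
`P = Q + AᵀP(I + WP)⁻¹A` under PBH observability of `(A, √Q)` and PBH
stabilizability of `(A, √W)`. -/
theorem stmt_15 {n : ℕ} (hn : 0 < n)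
    (A Q W : Matrix (Fin n) (Fin n) ℝ) (hQ : Q.PosSemidef) (hW : W.PosSemidef)
    (hobs : ¬ ∃ (γ : ℂ) (v : Fin n → ℂ), v ≠ 0 ∧
      (A.map (fun r : ℝ => (r : ℂ))) *ᵥ v = γ • v ∧
      (Q.map (fun r : ℝ => (r : ℂ))) *ᵥ v = 0)
    (hstab : ¬ ∃ (γ : ℂ) (v : Fin n → ℂ), 1 ≤ ‖γ‖ ∧ v ≠ 0 ∧
      (Aᵀ.map (fun r : ℝ => (r : ℂ))) *ᵥ v = γ • v ∧
      (W.map (fun r : ℝ => (r : ℂ))) *ᵥ v = 0)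
    (P₁ P₂ : Matrix (Fin n) (Fin n) ℝ) (hP₁ : P₁.PosSemidef) (hP₂ : P₂.PosSemidef)
    (hinv₁ : IsUnit ((1 : Matrix (Fin n) (Fin n) ℝ) + W * P₁))
    (hinv₂ : IsUnit ((1 : Matrix (Fin n) (Fin n) ℝ) + W * P₂))
    (hric₁ : P₁ = Q + Aᵀ * P₁ * ((1 : Matrix (Fin n) (Fin n) ℝ) + W * P₁)⁻¹ * A)
    (hric₂ : P₂ = Q + Aᵀ * P₂ * ((1 : Matrix (Fin n) (Fin n) ℝ) + W * P₂)⁻¹ * A) :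
    P₁ = P₂ := by
  have : NeZero n := ⟨hn.ne'⟩
  have hWs : Wᵀ = W := psd_symm hW
  have hP₁s : P₁ᵀ = P₁ := psd_symm hP₁
  have hP₂s : P₂ᵀ = P₂ := psd_symm hP₂
  set F₁ := ((1 : Matrix (Fin n) (Fin n) ℝ) + W * P₁)⁻¹ * A with hF₁
  set F₂ := ((1 : Matrix (Fin n) (Fin n) ℝ) + W * P₂)⁻¹ * A with hF₂
  obtain ⟨hA₁, hc₁⟩ := closed_form A Q W P₁ hP₁s hWs hinv₁ hric₁
  obtain ⟨hA₂, hc₂⟩ := closed_form A Q W P₂ hP₂s hWs hinv₂ hric₂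
  have hs₁ : ∀ μ ∈ spectrum ℂ (cm F₁), ‖μ‖₊ < 1 :=
    closedLoop_stable A Q W P₁ F₁ hQ hW hP₁ hA₁ hc₁ hobs
  have hs₂ : ∀ μ ∈ spectrum ℂ (cm F₂), ‖μ‖₊ < 1 :=
    closedLoop_stable A Q W P₂ F₂ hQ hW hP₂ hA₂ hc₂ hobs
  have hdiff := diff_form A Q W P₁ P₂ hP₁s hWs hinv₁ hinv₂ hric₁ hric₂
  set a₁ := cm (F₁ᵀ) with ha₁
  set a₂ := cm F₂ with ha₂
  set E := cm (P₁ - P₂) with hE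
  have hErec : E = a₁ * (E * a₂) := by
    rw [hE, ha₁, ha₂, ← cm_mul, ← cm_mul, ← hdiff]
  have hEk : ∀ k : ℕ, E = a₁ ^ k * E * a₂ ^ k := by
    intro k
    induction k with
    | zero => simp
    | succ k ih =>
      calc E = a₁ * (E * a₂) := hErec
        _ = a₁ * ((a₁ ^ k * E * a₂ ^ k) * a₂) := by rw [← ih]
        _ = a₁ ^ (k+1) * E * a₂ ^ (k+1) := by
            rw [pow_succ' a₁ k, pow_succ a₂ k]
            simp only [mul_assoc]
  have hs₁' : ∀ μ ∈ spectrum ℂ a₁, ‖μ‖₊ < 1 := by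
    intro μ hμ
    apply hs₁
    rwa [ha₁, cm_transpose, spectrum_transpose] at hμ
  have ht₁ := pow_tendsto_zero a₁ hs₁'
  have ht₂ := pow_tendsto_zero a₂ hs₂
  have htend : Filter.Tendsto (fun k : ℕ => ‖a₁ ^ k‖ * ‖E‖ * ‖a₂ ^ k‖)
      Filter.atTop (nhds 0) := by
    have := (ht₁.mul_const ‖E‖).mul ht₂
    simpa using this
  have hle : ∀ k : ℕ, ‖E‖ ≤ ‖a₁ ^ k‖ * ‖E‖ * ‖a₂ ^ k‖ := fun k => by
    calc ‖E‖ = ‖a₁ ^ k * E * a₂ ^ k‖ := by rw [← hEk k]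
      _ ≤ ‖a₁ ^ k * E‖ * ‖a₂ ^ k‖ := norm_mul_le ..
      _ ≤ ‖a₁ ^ k‖ * ‖E‖ * ‖a₂ ^ k‖ :=
          mul_le_mul_of_nonneg_right (norm_mul_le ..) (norm_nonneg _)
  have hE0 : ‖E‖ ≤ 0 := ge_of_tendsto' htend hle
  have hEzero : E = 0 := norm_le_zero_iff.mp hE0
  have hc0 : cm (P₁ - P₂) = 0 := hE.symm.trans hEzero
  have : P₁ - P₂ = 0 := by
    ext i j
    have h := congrFun (congrFun hc0 i) j
    simpa [cm, Matrix.sub_apply, ← Complex.ofReal_sub, Complex.ofReal_eq_zero] using h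
  exact sub_eq_zero.mp this
end

section
/- Let A, Q, W ∈ ℝ^{n×n} with Q and W symmetric, and set F := [[A, 0], [−Q, I]], G := [[I, W], [0, Aᵀ]]. Suppose V₁, V₂, M ∈ ℂ^{n×n} with V₁ invertible, F [V₁; V₂] = G [V₁; V₂] M, and put P := V₂ V₁⁻¹; assume I + W P is invertible. Then A − W ( I + P W )⁻¹ P A = ( I + W P )⁻¹ A = V₁ M V₁⁻¹. In particular, the closed-loop mean-state matrix A − W ( I + P W )⁻¹ P A has the same spectrum as M, and is stable (all eigenvalues of modulus < 1) whenever all eigenvalues of M have modulus strictly less than 1. -/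
open Matrix

/-- If `V₁` is invertible, `F [V₁; V₂] = G [V₁; V₂] M`, `P = V₂V₁⁻¹` and
`I + WP` is invertible, then
`A − W(I + PW)⁻¹PA = (I + WP)⁻¹A = V₁ M V₁⁻¹`; in particular the closed-loop
mean-state matrix has the same spectrum as `M` and is stable whenever `M` is. -/
theorem stmt_16 {n : ℕ} (hn : 0 < n)
    (A Q W : Matrix (Fin n) (Fin n) ℝ) (hQ : Q.IsSymm) (hW : W.IsSymm)
    (F G : Matrix (Fin n ⊕ Fin n) (Fin n ⊕ Fin n) ℝ)
    (hF : F = fromBlocks A 0 (-Q) 1)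
    (hG : G = fromBlocks 1 W 0 Aᵀ)
    (V₁ V₂ M : Matrix (Fin n) (Fin n) ℂ) (hV₁ : IsUnit V₁)
    (hFV : F.map (fun r : ℝ => (r : ℂ)) * fromRows V₁ V₂ =
      G.map (fun r : ℝ => (r : ℂ)) * fromRows V₁ V₂ * M)
    (P : Matrix (Fin n) (Fin n) ℂ) (hP : P = V₂ * V₁⁻¹)
    (hinv : IsUnit ((1 : Matrix (Fin n) (Fin n) ℂ) + W.map (fun r : ℝ => (r : ℂ)) * P)) :
    (A.map (fun r : ℝ => (r : ℂ)) - W.map (fun r : ℝ => (r : ℂ)) *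
        ((1 : Matrix (Fin n) (Fin n) ℂ) + P * W.map (fun r : ℝ => (r : ℂ)))⁻¹ * P *
        A.map (fun r : ℝ => (r : ℂ)) =
      ((1 : Matrix (Fin n) (Fin n) ℂ) + W.map (fun r : ℝ => (r : ℂ)) * P)⁻¹ *
        A.map (fun r : ℝ => (r : ℂ))) ∧
    (((1 : Matrix (Fin n) (Fin n) ℂ) + W.map (fun r : ℝ => (r : ℂ)) * P)⁻¹ *
        A.map (fun r : ℝ => (r : ℂ)) = V₁ * M * V₁⁻¹) ∧
    (spectrum ℂ (A.map (fun r : ℝ => (r : ℂ)) - W.map (fun r : ℝ => (r : ℂ)) *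
        ((1 : Matrix (Fin n) (Fin n) ℂ) + P * W.map (fun r : ℝ => (r : ℂ)))⁻¹ * P *
        A.map (fun r : ℝ => (r : ℂ))) = spectrum ℂ M) ∧
    ((∀ γ ∈ spectrum ℂ M, ‖γ‖ < 1) →
      ∀ γ ∈ spectrum ℂ (A.map (fun r : ℝ => (r : ℂ)) - W.map (fun r : ℝ => (r : ℂ)) *
          ((1 : Matrix (Fin n) (Fin n) ℂ) + P * W.map (fun r : ℝ => (r : ℂ)))⁻¹ * P *
          A.map (fun r : ℝ => (r : ℂ))),
        ‖γ‖ < 1) := by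
  set f : ℝ → ℂ := fun r : ℝ => (r : ℂ) with hf
  set A' := A.map f
  set W' := W.map f
  set Q' := Q.map f
  have hFm : F.map f = fromBlocks A' 0 (-Q') 1 := by
    subst hF
    ext (i|i) (j|j) <;>
      simp [Matrix.map_apply, Matrix.one_apply, A', Q', hf, apply_ite] <;>
      try rfl
  have hGm : G.map f = fromBlocks 1 W' 0 A'ᵀ := by
    subst hG
    ext (i|i) (j|j) <;>
      simp [Matrix.map_apply, Matrix.one_apply, A', W', hf, apply_ite] <;>
      try rfl
  rw [hFm, hGm, fromBlocks_mul_fromRows, fromBlocks_mul_fromRows] at hFV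
  have htop : A' * V₁ = (V₁ + W' * V₂) * M := by
    have h1 := congrArg Matrix.toRows₁ hFV
    simpa [Matrix.toRows₁_fromRows, Matrix.fromRows_mul] using h1
  have hdet : IsUnit V₁.det := (Matrix.isUnit_iff_isUnit_det V₁).mp hV₁
  have hPV₁ : P * V₁ = V₂ := by
    rw [hP, Matrix.mul_assoc, Matrix.nonsing_inv_mul V₁ hdet, Matrix.mul_one]
  have hfac : V₁ + W' * V₂ = (1 + W' * P) * V₁ := by
    rw [Matrix.add_mul, Matrix.one_mul, Matrix.mul_assoc, hPV₁]
  set S := (1 : Matrix (Fin n) (Fin n) ℂ) + W' * P with hS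
  have hA' : A' = S * (V₁ * M * V₁⁻¹) := by
    have h := congrArg (· * V₁⁻¹) htop
    rw [Matrix.mul_assoc, Matrix.mul_nonsing_inv V₁ hdet, Matrix.mul_one, hfac] at h
    rw [h]; simp only [Matrix.mul_assoc]
  have hSdet : IsUnit S.det := (Matrix.isUnit_iff_isUnit_det S).mp hinv
  have h2 : S⁻¹ * A' = V₁ * M * V₁⁻¹ := by
    rw [hA', ← Matrix.mul_assoc, Matrix.nonsing_inv_mul S hSdet, Matrix.one_mul]
  set T := (1 : Matrix (Fin n) (Fin n) ℂ) + P * W' with hT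
  have hTdet : IsUnit T.det := by
    have h : T.det = S.det := by
      rw [hT, hS, add_comm (1 : Matrix (Fin n) (Fin n) ℂ) (P * W'),
        add_comm (1 : Matrix (Fin n) (Fin n) ℂ) (W' * P), Matrix.det_mul_add_one_comm]
    rw [h]; exact hSdet
  have hcomm : S * W' = W' * T := by
    rw [hS, hT, Matrix.add_mul, Matrix.mul_add, Matrix.one_mul, Matrix.mul_one,
      Matrix.mul_assoc]
  have hkey : S * (W' * (T⁻¹ * P)) = W' * P := by
    rw [← Matrix.mul_assoc S W', hcomm, Matrix.mul_assoc, ← Matrix.mul_assoc T T⁻¹,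
      Matrix.mul_nonsing_inv T hTdet, Matrix.one_mul]
  have hSinv : S⁻¹ = 1 - W' * T⁻¹ * P := by
    refine Matrix.inv_eq_right_inv ?_
    rw [Matrix.mul_sub, Matrix.mul_one, Matrix.mul_assoc W' T⁻¹ P, hkey, hS,
      add_sub_cancel_right]
  have h1 : A' - W' * T⁻¹ * P * A' = S⁻¹ * A' := by
    rw [hSinv, Matrix.sub_mul, Matrix.one_mul]
  have hspec : spectrum ℂ (A' - W' * T⁻¹ * P * A') = spectrum ℂ M := by
    rw [h1, h2, ← hV₁.unit_spec, ← Matrix.coe_units_inv]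
    exact spectrum.units_conjugate
  exact ⟨h1, h2, hspec, fun hMstab γ hγ => hMstab γ (hspec ▸ hγ)⟩
end

section
/- Let Q, P ∈ ℝ^{n×n} be symmetric positive semidefinite, R ∈ ℝ^{m×m} symmetric positive definite, A ∈ ℝ^{n×n}, B ∈ ℝ^{n×m}, Ξ ∈ ℝ^{n×k}. Then I + P B R⁻¹ Bᵀ is invertible, and as λ → ∞ the minimax Riccati map converges to the standard LQG Riccati map: the function λ ↦ Q + Aᵀ ( I + P B R⁻¹ Bᵀ − (1/λ) P Ξ Ξᵀ )⁻¹ P A tends to Q + Aᵀ ( I + P B R⁻¹ Bᵀ )⁻¹ P A as λ → ∞. -/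
open Matrix Filter

lemma aux_isUnit {n : ℕ} (P S : Matrix (Fin n) (Fin n) ℝ)
    (hP : P.PosSemidef) (hS : S.PosSemidef) :
    IsUnit ((1 : Matrix (Fin n) (Fin n) ℝ) + P * S) := by
  rw [Matrix.isUnit_iff_isUnit_det]
  obtain ⟨Ps, hPs_mul, hPs_psd⟩ : ∃ Ps : Matrix (Fin n) (Fin n) ℝ, Ps * Ps = P ∧ Ps.PosSemidef := by
    open scoped MatrixOrder in
    exact ⟨CFC.sqrt P, CFC.sqrt_mul_sqrt_self P hP.nonneg, (CFC.sqrt_nonneg P).posSemidef⟩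
  have h1 : (1 : Matrix (Fin n) (Fin n) ℝ) + P * S
      = 1 + Ps * (Ps * S) := by
    rw [← mul_assoc, hPs_mul]
  have h2 : ((1 : Matrix (Fin n) (Fin n) ℝ) + P * S).det
      = ((1 : Matrix (Fin n) (Fin n) ℝ) + Ps * S * Ps).det := by
    rw [h1, Matrix.det_one_add_mul_comm]
  have hpsd : (Ps * S * Ps).PosSemidef := by
    have := hS.mul_mul_conjTranspose_same Ps
    rwa [Matrix.conjTranspose_eq_transpose_of_trivial,
      show Psᵀ = Ps from by
        rw [← Matrix.conjTranspose_eq_transpose_of_trivial]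
        exact hPs_psd.isHermitian] at this
  have hpd : ((1 : Matrix (Fin n) (Fin n) ℝ) + Ps * S * Ps).PosDef :=
    Matrix.PosDef.add_posSemidef Matrix.PosDef.one hpsd
  rw [h2]
  exact isUnit_iff_ne_zero.mpr (ne_of_gt hpd.det_pos)

/-- `I + PBR⁻¹Bᵀ` is invertible and, as `λ → ∞`, the minimax Riccati map
`Q + Aᵀ(I + PBR⁻¹Bᵀ − (1/λ)PΞΞᵀ)⁻¹PA` converges to the standard LQG Riccati map
`Q + Aᵀ(I + PBR⁻¹Bᵀ)⁻¹PA`. -/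
theorem stmt_18 {n m k : ℕ} (hn : 0 < n) (hm : 0 < m) (hk : 0 < k)
    (Q : Matrix (Fin n) (Fin n) ℝ) (hQ : Q.PosSemidef)
    (P : Matrix (Fin n) (Fin n) ℝ) (hP : P.PosSemidef)
    (R : Matrix (Fin m) (Fin m) ℝ) (hR : R.PosDef)
    (A : Matrix (Fin n) (Fin n) ℝ) (B : Matrix (Fin n) (Fin m) ℝ)
    (Ξ : Matrix (Fin n) (Fin k) ℝ) :
    IsUnit ((1 : Matrix (Fin n) (Fin n) ℝ) + P * B * R⁻¹ * Bᵀ) ∧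
    Tendsto (fun l : ℝ =>
        Q + Aᵀ * ((1 : Matrix (Fin n) (Fin n) ℝ) + P * B * R⁻¹ * Bᵀ
          - (1 / l) • (P * Ξ * Ξᵀ))⁻¹ * P * A)
      atTop
      (nhds (Q + Aᵀ * ((1 : Matrix (Fin n) (Fin n) ℝ) + P * B * R⁻¹ * Bᵀ)⁻¹ * P * A)) := by
  have hS : (B * R⁻¹ * Bᵀ).PosSemidef := by
    have := hR.inv.posSemidef.mul_mul_conjTranspose_same B
    simpa using this
  have hUnit : IsUnit ((1 : Matrix (Fin n) (Fin n) ℝ) + P * B * R⁻¹ * Bᵀ) := by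
    have := aux_isUnit P (B * R⁻¹ * Bᵀ) hP hS
    rwa [← Matrix.mul_assoc, ← Matrix.mul_assoc] at this
  refine ⟨hUnit, ?_⟩
  set M₀ : Matrix (Fin n) (Fin n) ℝ := 1 + P * B * R⁻¹ * Bᵀ with hM₀
  set N : Matrix (Fin n) (Fin n) ℝ := P * Ξ * Ξᵀ with hN
  set f : ℝ → Matrix (Fin n) (Fin n) ℝ := fun l => M₀ - (1 / l) • N with hf
  have hsmul : Tendsto (fun l : ℝ => (1 / l) • N) atTop (nhds 0) := by
    have h0 : Tendsto (fun l : ℝ => 1 / l) atTop (nhds 0) := by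
      simpa [one_div] using tendsto_inv_atTop_zero
    simpa using h0.smul_const N
  have hfl : Tendsto f atTop (nhds M₀) := by
    have := (tendsto_const_nhds (x := M₀) (f := atTop)).sub hsmul
    simpa [hf, one_div] using this
  have hdetne : M₀.det ≠ 0 := (Matrix.isUnit_iff_isUnit_det M₀ |>.mp hUnit).ne_zero
  have hdet : Tendsto (fun l => (f l).det) atTop (nhds M₀.det) :=
    ((continuous_id.matrix_det).tendsto M₀).comp hfl
  have hdetinv : Tendsto (fun l => ((f l).det)⁻¹) atTop (nhds (M₀.det)⁻¹) :=
    hdet.inv₀ hdetne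
  have hadj : Tendsto (fun l => (f l).adjugate) atTop (nhds M₀.adjugate) :=
    ((continuous_id.matrix_adjugate).tendsto M₀).comp hfl
  have hinv : Tendsto (fun l => (f l)⁻¹) atTop (nhds M₀⁻¹) := by
    simp only [Matrix.inv_def, Ring.inverse_eq_inv']
    exact hdetinv.smul hadj
  have hg : Continuous (fun X : Matrix (Fin n) (Fin n) ℝ => Q + Aᵀ * X * P * A) :=
    continuous_const.add
      (((continuous_const.matrix_mul continuous_id).matrix_mul continuous_const).matrix_mul
        continuous_const)
  exact (hg.tendsto M₀⁻¹).comp hinv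
end

section
/- Let P, Q̄, Ā ∈ ℂ^{n×n} with P and Q̄ Hermitian positive semidefinite and P = Āᴴ P Ā + Q̄ (discrete-time Lyapunov equation, ᴴ denoting conjugate transpose). If v ∈ ℂⁿ and γ ∈ ℂ satisfy Ā v = γ v and |γ| ≥ 1, then Q̄ v = 0. -/
open Matrix ComplexOrder

/-- Eigenvector step for the discrete Lyapunov equation: if `P ⪰ 0`,
`Q̄ ⪰ 0`, `P = Āᴴ P Ā + Q̄`, and `Ā v = γ v` with `|γ| ≥ 1`, then `Q̄ v = 0`. -/
theorem stmt_19 {n : ℕ} (hn : 0 < n)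
    (P Qbar Abar : Matrix (Fin n) (Fin n) ℂ)
    (hP : P.PosSemidef) (hQbar : Qbar.PosSemidef)
    (hlyap : P = Abarᴴ * P * Abar + Qbar)
    (v : Fin n → ℂ) (γ : ℂ)
    (hv : Abar *ᵥ v = γ • v) (hγ : 1 ≤ ‖γ‖) :
    Qbar *ᵥ v = 0 := by
  rw [← hQbar.dotProduct_mulVec_zero_iff]
  set a : ℂ := star v ⬝ᵥ P *ᵥ v with ha
  set b : ℂ := star v ⬝ᵥ Qbar *ᵥ v with hb
  have ha0 : 0 ≤ a := hP.dotProduct_mulVec_nonneg v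
  have hb0 : 0 ≤ b := hQbar.dotProduct_mulVec_nonneg v
  have h1 : star v ⬝ᵥ (Abarᴴ * P * Abar) *ᵥ v
      = starRingEnd ℂ γ * γ * a := by
    rw [← Matrix.mulVec_mulVec, ← Matrix.mulVec_mulVec,
      dotProduct_mulVec, Matrix.vecMul_conjTranspose, star_star, hv, star_smul,
      Matrix.mulVec_smul, smul_dotProduct, dotProduct_smul, ha, smul_smul]
    simp [smul_eq_mul]
  have key : a = starRingEnd ℂ γ * γ * a + b := by
    conv_lhs => rw [ha, hlyap, Matrix.add_mulVec, dotProduct_add, h1]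
  have hc : starRingEnd ℂ γ * γ = ((‖γ‖ ^ 2 : ℝ) : ℂ) := by
    rw [mul_comm, Complex.mul_conj, Complex.normSq_eq_norm_sq]
  rw [hc] at key
  have hare : 0 ≤ a.re := (Complex.le_def.mp ha0).1
  have haim : a.im = 0 := ((Complex.le_def.mp ha0).2).symm.trans rfl |>.symm ▸ (Complex.le_def.mp ha0).2.symm
  have hbre : 0 ≤ b.re := (Complex.le_def.mp hb0).1
  have hbim : b.im = 0 := by
    have := (Complex.le_def.mp hb0).2
    simpa using this.symm
  have haim' : a.im = 0 := by
    have := (Complex.le_def.mp ha0).2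
    simpa using this.symm
  have hre := congrArg Complex.re key
  rw [Complex.add_re, Complex.mul_re, Complex.ofReal_re, Complex.ofReal_im, haim] at hre
  simp at hre
  have hγ2 : (1 : ℝ) ≤ ‖γ‖ ^ 2 := by nlinarith
  have hbre0 : b.re = 0 := by
    nlinarith [mul_nonneg (sub_nonneg.mpr hγ2) hare]
  exact Complex.ext hbre0 hbim
end
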